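/- arXiv:2112.05877 — 5 statements merged into one kernel-verified Lean document; each statement's English description precedes it below -/
import Mathlib

section
/- For every C > 0, the set V_C of equivalence classes in L¹([0,1]) represented by functions f:[0,1]→[0,∞) of bounded variation with f(0) ≤ C and total variation Var f ≤ C is a compact subset of the metric space (L¹([0,1]), ρ). -/
/-!
Helly's selection theorem: a function of variation at most `V` on `[a, b]` is, after clamping its
argument to `[a, b]`, a difference of two monotone functions on `ℝ` bounded by `|f a| + 2V`. A
diagonal argument makes a uniformly bounded sequence of monotone functions converge on `ℚ`; its
limit (a `liminf`) is monotone, so convergence extends to all of its continuity points and, by a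
second diagonal extraction, to its countably many jumps. Thus every sequence in `V_C` has a
subsequence converging pointwise on `[0, 1]`; the limit is nonnegative with `g 0 ≤ C` and, by lower
semicontinuity of the variation, `Var g ≤ C`, and the uniform bound `2C` turns pointwise
convergence into `L¹` convergence by dominated convergence.
-/

open MeasureTheory Set Filter Topology
open scoped ENNReal

theorem exists_subseq_tendsto_on_countable {α β : Type*} [TopologicalSpace β]
    [FirstCountableTopology β] {K : Set β} (hK : IsCompact K) (g : ℕ → α → β) {T : Set α}
    (hT : T.Countable) (hgK : ∀ n x, g n x ∈ K) :
    ∃ φ : ℕ → ℕ, StrictMono φ ∧ ∀ x ∈ T, ∃ l, Tendsto (fun n => g (φ n) x) atTop (𝓝 l) := by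
  have : Countable T := hT.to_subtype
  obtain ⟨l, -, φ, hφ, hl⟩ := (isCompact_univ_pi fun _ : T => hK).tendsto_subseq
    (x := fun n (x : T) => g n x) fun n x _ => hgK n x
  exact ⟨φ, hφ, fun x hx => ⟨l ⟨x, hx⟩, tendsto_pi_nhds.mp hl ⟨x, hx⟩⟩⟩

theorem tendsto_of_tendsto_rat_of_monotone {p : ℕ → ℝ → ℝ} (hp : ∀ n, Monotone (p n))
    {P : ℝ → ℝ} (hP : ∀ q : ℚ, Tendsto (fun n => p n q) atTop (𝓝 (P q))) {x : ℝ}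
    (hx : ContinuousAt P x) : Tendsto (fun n => p n x) atTop (𝓝 (P x)) := by
  refine tendsto_order.2 ⟨fun a ha => ?_, fun a ha => ?_⟩
  · obtain ⟨ε, hε, hPε⟩ := Metric.eventually_nhds_iff.1 (hx.eventually (lt_mem_nhds ha))
    obtain ⟨q, hq⟩ := exists_rat_btwn (sub_lt_self x hε)
    have hqx : dist (q : ℝ) x < ε := by rw [Real.dist_eq, abs_lt]; constructor <;> linarith
    filter_upwards [(hP q).eventually (lt_mem_nhds (hPε hqx))] with n hn
    exact hn.trans_le (hp n hq.2.le)
  · obtain ⟨ε, hε, hPε⟩ := Metric.eventually_nhds_iff.1 (hx.eventually (gt_mem_nhds ha))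
    obtain ⟨q, hq⟩ := exists_rat_btwn (lt_add_of_pos_right x hε)
    have hqx : dist (q : ℝ) x < ε := by rw [Real.dist_eq, abs_lt]; constructor <;> linarith
    filter_upwards [(hP q).eventually (gt_mem_nhds (hPε hqx))] with n hn
    exact (hp n hq.1.le).trans_lt hn

theorem exists_subseq_tendsto_of_monotone {p : ℕ → ℝ → ℝ} {B : ℝ} (hp : ∀ n, Monotone (p n))
    (hB : ∀ n x, |p n x| ≤ B) :
    ∃ φ : ℕ → ℕ, StrictMono φ ∧ ∀ x, ∃ l, Tendsto (fun n => p (φ n) x) atTop (𝓝 l) := by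
  have hpB : ∀ n x, p n x ∈ Icc (-B) B := fun n x => abs_le.1 (hB n x)
  obtain ⟨φ, hφ, hrat⟩ := exists_subseq_tendsto_on_countable isCompact_Icc p
    (countable_range ((↑) : ℚ → ℝ)) hpB
  set P : ℝ → ℝ := fun x => liminf (fun n => p (φ n) x) atTop
  have hP : Monotone P := fun a b hab =>
    liminf_le_liminf (.of_forall fun n => hp _ hab) (isBoundedUnder_of ⟨-B, fun n => (hpB _ a).1⟩)
      (isBoundedUnder_of ⟨B, fun n => (hpB _ b).2⟩).isCoboundedUnder_ge
  have hPrat : ∀ q : ℚ, Tendsto (fun n => p (φ n) q) atTop (𝓝 (P q)) := fun q => by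
    obtain ⟨l, hl⟩ := hrat q ⟨q, rfl⟩
    rwa [show P q = l from hl.liminf_eq]
  obtain ⟨ψ, hψ, hjump⟩ := exists_subseq_tendsto_on_countable isCompact_Icc (fun n => p (φ n))
    hP.countable_not_continuousAt fun n => hpB _
  refine ⟨φ ∘ ψ, hφ.comp hψ, fun x => ?_⟩
  by_cases hx : ContinuousAt P x
  · exact ⟨P x,
      (tendsto_of_tendsto_rat_of_monotone (fun n => hp _) hPrat hx).comp hψ.tendsto_atTop⟩
  · exact hjump x hx

theorem BoundedVariationOn.exists_monotone_sub_monotone {f : ℝ → ℝ} {a b : ℝ} (hab : a ≤ b)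
    (hf : BoundedVariationOn f (Icc a b)) :
    ∃ p q : ℝ → ℝ, Monotone p ∧ Monotone q ∧ (∀ x ∈ Icc a b, f x = p x - q x) ∧
      ∀ x, |p x| ≤ |f a| + 2 * (eVariationOn f (Icc a b)).toReal ∧
        |q x| ≤ |f a| + 2 * (eVariationOn f (Icc a b)).toReal := by
  set V := (eVariationOn f (Icc a b)).toReal
  set c : ℝ → ℝ := fun x => projIcc a b hab x
  set v := variationOnFromTo f (Icc a b) a
  have hc : ∀ x, c x ∈ Icc a b := fun x => Subtype.prop _
  have hcm : Monotone c := fun x y hxy => monotone_projIcc hab hxy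
  have ha : a ∈ Icc a b := left_mem_Icc.2 hab
  have hv : ∀ x, |v x| ≤ V := fun x => variationOnFromTo.abs_le_eVariationOn hf
  have hfc : ∀ x, |f (c x)| ≤ |f a| + V := fun x =>
    calc |f (c x)| ≤ |f a| + dist (f (c x)) (f a) := by
          rw [Real.dist_eq]; linarith [abs_sub_abs_le_abs_sub (f (c x)) (f a)]
      _ ≤ |f a| + V := by gcongr; exact hf.dist_le (hc x) ha
  refine ⟨v ∘ c, (v - f) ∘ c, fun x y hxy => ?_, fun x y hxy => ?_, fun x hx => ?_,
    fun x => ⟨?_, ?_⟩⟩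
  · exact variationOnFromTo.monotoneOn hf.locallyBoundedVariationOn ha (hc x) (hc y) (hcm hxy)
  · exact variationOnFromTo.sub_self_monotoneOn hf.locallyBoundedVariationOn ha (hc x) (hc y)
      (hcm hxy)
  · simp [c, projIcc_of_mem hab hx]
  · show |v (c x)| ≤ _
    linarith [hv (c x), abs_nonneg (f a), (ENNReal.toReal_nonneg : 0 ≤ V)]
  · show |v (c x) - f (c x)| ≤ _
    linarith [hv (c x), hfc x, abs_sub (v (c x)) (f (c x))]

theorem exists_subseq_tendsto_of_boundedVariationOn {f : ℕ → ℝ → ℝ} {a b M V : ℝ} (hab : a ≤ b)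
    (hf : ∀ n, BoundedVariationOn (f n) (Icc a b))
    (hV : ∀ n, (eVariationOn (f n) (Icc a b)).toReal ≤ V) (hM : ∀ n, |f n a| ≤ M) :
    ∃ φ : ℕ → ℕ, StrictMono φ ∧ ∃ g : ℝ → ℝ,
      ∀ x ∈ Icc a b, Tendsto (fun n => f (φ n) x) atTop (𝓝 (g x)) := by
  choose p q hp hq hfpq hpq using fun n => (hf n).exists_monotone_sub_monotone hab
  have hB : ∀ n x, |p n x| ≤ M + 2 * V ∧ |q n x| ≤ M + 2 * V := fun n x =>
    ⟨(hpq n x).1.trans (by linarith [hM n, hV n]), (hpq n x).2.trans (by linarith [hM n, hV n])⟩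
  obtain ⟨φ, hφ, hpφ⟩ := exists_subseq_tendsto_of_monotone hp fun n x => (hB n x).1
  obtain ⟨ψ, hψ, hqψ⟩ := exists_subseq_tendsto_of_monotone (fun n => hq (φ n))
    fun n x => (hB (φ n) x).2
  refine ⟨φ ∘ ψ, hφ.comp hψ, fun x => limUnder atTop fun n => f (φ (ψ n)) x, fun x hx => ?_⟩
  obtain ⟨l₁, hl₁⟩ := hpφ x
  obtain ⟨l₂, hl₂⟩ := hqψ x
  refine tendsto_nhds_limUnder ⟨l₁ - l₂, ?_⟩
  simp only [Function.comp_apply, hfpq _ x hx]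
  exact (hl₁.comp hψ.tendsto_atTop).sub hl₂

theorem eVariationOn.le_of_tendsto {α E ι : Type*} [LinearOrder α] [PseudoEMetricSpace E]
    {l : Filter ι} [l.NeBot] {F : ι → α → E} {f : α → E} {s : Set α} {c : ℝ≥0∞}
    (hF : ∀ x ∈ s, Tendsto (fun i => F i x) l (𝓝 (f x)))
    (hc : ∀ᶠ i in l, eVariationOn (F i) s ≤ c) : eVariationOn f s ≤ c := by
  by_contra! h
  obtain ⟨i, hlt, hle⟩ := ((eVariationOn.lowerSemicontinuous_aux hF h).and hc).exists
  exact hlt.not_ge hle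

theorem Lp.exists_tendsto_of_dominated {α E : Type*} [MeasurableSpace α] {μ : Measure α}
    [NormedAddCommGroup E] {u : ℕ → Lp E 1 μ} {g : α → E} {bound : α → ℝ}
    (hbound : Integrable bound μ) (hu : ∀ n, ∀ᵐ x ∂μ, ‖u n x‖ ≤ bound x)
    (hg : ∀ᵐ x ∂μ, Tendsto (fun n => u n x) atTop (𝓝 (g x))) :
    ∃ v : Lp E 1 μ, v =ᵐ[μ] g ∧ Tendsto u atTop (𝓝 v) := by
  have hgm : AEStronglyMeasurable g μ :=
    aestronglyMeasurable_of_tendsto_ae _ (fun n => Lp.aestronglyMeasurable (u n)) hg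
  have hgb : ∀ᵐ x ∂μ, ‖g x‖ ≤ bound x := by
    filter_upwards [hg, ae_all_iff.2 hu] with x hx hxb
    exact le_of_tendsto' hx.norm hxb
  have hgL : MemLp g 1 μ := memLp_one_iff_integrable.2 (hbound.mono' hgm hgb)
  refine ⟨hgL.toLp g, hgL.coeFn_toLp, (Lp.tendsto_Lp_iff_tendsto_eLpNorm u g hgL).2 ?_⟩
  simp_rw [eLpNorm_one_eq_lintegral_enorm, Pi.sub_apply, ← ofReal_norm]
  exact tendsto_lintegral_norm_of_dominated_convergence (fun n => Lp.aestronglyMeasurable (u n))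
    hbound.hasFiniteIntegral hu hg

theorem stmt_0_general (C : ℝ) :
    IsCompact {h : Lp ℝ 1 (volume.restrict (Set.Icc (0:ℝ) 1)) |
      ∃ f : ℝ → ℝ,
        (∀ t ∈ Set.Icc (0:ℝ) 1, 0 ≤ f t) ∧
        BoundedVariationOn f (Set.Icc 0 1) ∧
        f 0 ≤ C ∧
        eVariationOn f (Set.Icc 0 1) ≤ ENNReal.ofReal C ∧
        (∀ᵐ t ∂(volume.restrict (Set.Icc (0:ℝ) 1)), h t = f t)} := by
  refine IsSeqCompact.isCompact fun u hu => ?_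
  choose f hpos hbv hf0 hvar hae using hu
  have h0 : (0 : ℝ) ∈ Icc (0 : ℝ) 1 := left_mem_Icc.2 zero_le_one
  have hC : 0 ≤ C := (hpos 0 0 h0).trans (hf0 0)
  have hV : ∀ n, (eVariationOn (f n) (Icc 0 1)).toReal ≤ C := fun n =>
    ENNReal.toReal_le_of_le_ofReal hC (hvar n)
  have hbound : ∀ n, ∀ x ∈ Icc (0 : ℝ) 1, |f n x| ≤ 2 * C := fun n x hx => by
    rw [abs_of_nonneg (hpos n x hx)]
    linarith [(hbv n).sub_le hx h0, hV n, hf0 n]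
  obtain ⟨φ, hφ, g, hg⟩ := exists_subseq_tendsto_of_boundedVariationOn zero_le_one hbv hV
    fun n => hbound n 0 h0
  have hmem : ∀ᵐ t ∂(volume.restrict (Icc (0 : ℝ) 1)), t ∈ Icc (0 : ℝ) 1 :=
    ae_restrict_mem measurableSet_Icc
  obtain ⟨v, hvg, hv⟩ := Lp.exists_tendsto_of_dominated (u := u ∘ φ) (g := g)
    (integrable_const (2 * C)) (fun n => by
      filter_upwards [hae (φ n), hmem] with t ht htI
      simpa only [Function.comp_apply, ht, Real.norm_eq_abs] using hbound (φ n) t htI)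
    (by
      filter_upwards [ae_all_iff.2 fun n => hae (φ n), hmem] with t ht htI
      simpa only [Function.comp_apply, ht] using hg t htI)
  have hgvar : eVariationOn g (Icc 0 1) ≤ ENNReal.ofReal C :=
    eVariationOn.le_of_tendsto hg (.of_forall fun n => hvar (φ n))
  refine ⟨v, ⟨g, fun t ht => ge_of_tendsto' (hg t ht) fun n => hpos _ t ht,
    ne_top_of_le_ne_top ENNReal.ofReal_ne_top hgvar, le_of_tendsto' (hg 0 h0) fun n => hf0 _,
    hgvar, hvg⟩, φ, hφ, hv⟩

/-- For every `C > 0`, the set `V_C` of equivalence classes in `L¹([0,1])` represented by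
functions `f : [0,1] → [0,∞)` of bounded variation with `f 0 ≤ C` and total variation
`Var f ≤ C` is a compact subset of `L¹([0,1])`. -/
theorem stmt_0 (C : ℝ) (hC : 0 < C) :
    IsCompact {h : Lp ℝ 1 (volume.restrict (Set.Icc (0:ℝ) 1)) |
      ∃ f : ℝ → ℝ,
        (∀ t ∈ Set.Icc (0:ℝ) 1, 0 ≤ f t) ∧
        BoundedVariationOn f (Set.Icc 0 1) ∧
        f 0 ≤ C ∧
        eVariationOn f (Set.Icc 0 1) ≤ ENNReal.ofReal C ∧
        (∀ᵐ t ∂(volume.restrict (Set.Icc (0:ℝ) 1)), h t = f t)} :=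
  stmt_0_general C
end

section
/- Let u:[0,1]→ℝ be nondecreasing and let u(1⁻) := lim_{t→1⁻} u(t) be its left limit at 1. Then there exists a function δ:(0,∞)→(0,∞) with lim_{ε→0⁺} δ(ε) = 0 such that for every ε > 0 and every nondecreasing function g:[0,1]→ℝ with ∫₀¹ |g(t) − u(t)| dt < ε, one has g(1) ≥ u(1⁻) − δ(ε). -/
/-!
Monotonicity of `u` and `g` gives `u - g ≥ u t - g 1` on `[t, 1]`, hence
`(u t - g 1) (1 - t) ≤ ∫ |g - u| < ε`. With `t = (1 + √ε)⁻¹` one has `ε / (1 - t) = √ε + ε`,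
so `g 1 ≥ u t - (√ε + ε)`, and `δ ε = (β - u t) + (√ε + ε)` works: it is positive since
`u t ≤ β`, and it tends to `0` since `t → 1⁻`.
-/

open MeasureTheory Set Filter Topology

theorem MonotoneOn.le_of_tendsto_nhdsLT {u : ℝ → ℝ} {a b t β : ℝ} (hu : MonotoneOn u (Icc a b))
    (hβ : Tendsto u (𝓝[<] b) (𝓝 β)) (ht : t ∈ Ico a b) : u t ≤ β :=
  ge_of_tendsto hβ <| by
    filter_upwards [Ioo_mem_nhdsLT ht.2] with s hs
    exact hu ⟨ht.1, ht.2.le⟩ ⟨ht.1.trans hs.1.le, hs.2.le⟩ hs.1.le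

theorem sub_mul_le_setIntegral_abs_sub {u g : ℝ → ℝ} {a b t : ℝ} (hu : MonotoneOn u (Icc a b))
    (hg : MonotoneOn g (Icc a b)) (ht : t ∈ Icc a b) :
    (u t - g b) * (b - t) ≤ ∫ x in Icc a b, |g x - u x| := by
  have hb : b ∈ Icc a b := ⟨ht.1.trans ht.2, le_rfl⟩
  have hsub : Icc t b ⊆ Icc a b := Icc_subset_Icc_left ht.1
  have hint : IntegrableOn (fun x => |g x - u x|) (Icc a b) :=
    ((hg.integrableOn_isCompact isCompact_Icc).sub (hu.integrableOn_isCompact isCompact_Icc)).abs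
  have hgap : ∀ x ∈ Icc t b, u t - g b ≤ |g x - u x| := fun x hx => by
    have := hu ht (hsub hx) hx.1
    have := hg (hsub hx) hb hx.2
    rw [abs_sub_comm]
    exact (by linarith : u t - g b ≤ u x - g x).trans (le_abs_self _)
  calc (u t - g b) * (b - t) = ∫ _ in Icc t b, (u t - g b) := by
        rw [setIntegral_const, Real.volume_real_Icc_of_le ht.2, smul_eq_mul, mul_comm]
    _ ≤ ∫ x in Icc t b, |g x - u x| :=
        setIntegral_mono_on (integrableOn_const measure_Icc_lt_top.ne) (hint.mono_set hsub)
          measurableSet_Icc hgap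
    _ ≤ ∫ x in Icc a b, |g x - u x| :=
        setIntegral_mono_set hint (ae_of_all _ fun _ => abs_nonneg _) (ae_of_all _ hsub)

theorem tendsto_inv_one_add_sqrt_nhdsGT_zero :
    Tendsto (fun ε : ℝ => (1 + √ε)⁻¹) (𝓝[>] 0) (𝓝[<] 1) := by
  refine tendsto_nhdsWithin_of_tendsto_nhds_of_eventually_within _ ?_ ?_
  · have : ContinuousAt (fun ε : ℝ => (1 + √ε)⁻¹) 0 := by fun_prop (disch := simp)
    simpa using this.tendsto.mono_left nhdsWithin_le_nhds
  · filter_upwards [self_mem_nhdsWithin] with ε (hε : 0 < ε)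
    exact inv_lt_one_of_one_lt₀ (lt_add_of_pos_right 1 (Real.sqrt_pos.2 hε))

/-- Let `u : [0,1] → ℝ` be nondecreasing with left limit `β` at `1`. Then there exists
`δ : (0,∞) → (0,∞)` with `δ(ε) → 0` as `ε → 0⁺` such that for every `ε > 0` and every
nondecreasing `g : [0,1] → ℝ` with `∫₀¹ |g - u| < ε`, one has `g 1 ≥ β - δ(ε)`. -/
theorem stmt_4 (u : ℝ → ℝ) (hu : MonotoneOn u (Set.Icc 0 1))
    (β : ℝ) (hβ : Filter.Tendsto u (nhdsWithin 1 (Set.Iio 1)) (nhds β)) :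
    ∃ δ : ℝ → ℝ,
      (∀ ε > (0:ℝ), 0 < δ ε) ∧
      Filter.Tendsto δ (nhdsWithin 0 (Set.Ioi 0)) (nhds 0) ∧
      ∀ ε > (0:ℝ), ∀ g : ℝ → ℝ, MonotoneOn g (Set.Icc 0 1) →
        (∫ t in Set.Icc (0:ℝ) 1, |g t - u t|) < ε →
        g 1 ≥ β - δ ε := by
  set t₀ : ℝ → ℝ := fun ε => (1 + √ε)⁻¹
  have ht₀ : ∀ ε > (0:ℝ), t₀ ε ∈ Ico 0 1 := fun ε hε =>
    ⟨by positivity, inv_lt_one_of_one_lt₀ (lt_add_of_pos_right 1 (Real.sqrt_pos.2 hε))⟩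
  have hscale : ∀ ε > (0:ℝ), (√ε + ε) * (1 - t₀ ε) = ε := fun ε hε => by
    simp only [t₀]
    field_simp
    linear_combination Real.mul_self_sqrt hε.le
  refine ⟨fun ε => (β - u (t₀ ε)) + (√ε + ε), fun ε hε => ?_, ?_, fun ε hε g hg hint => ?_⟩
  · have := hu.le_of_tendsto_nhdsLT hβ (ht₀ ε hε)
    positivity
  · have hcont : Tendsto (fun ε : ℝ => √ε + ε) (𝓝[>] 0) (𝓝 0) := by
      exact ((Real.continuous_sqrt.add continuous_id).tendsto' 0 0 (by simp)).mono_left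
        nhdsWithin_le_nhds
    simpa using ((hβ.comp tendsto_inv_one_add_sqrt_nhdsGT_zero).const_sub β).add hcont
  · have hlt : (u (t₀ ε) - g 1) * (1 - t₀ ε) < (√ε + ε) * (1 - t₀ ε) := by
      rw [hscale ε hε]
      exact (sub_mul_le_setIntegral_abs_sub hu hg (Ico_subset_Icc_self (ht₀ ε hε))).trans_lt hint
    have := lt_of_mul_lt_mul_right hlt (sub_nonneg.2 (ht₀ ε hε).2.le)
    linarith
end

section
/- Let φ:(0,∞)→(0,∞) satisfy lim_{T→∞} φ(T) = ∞ and liminf_{T→∞} (ln φ(T))/T > 0 (this covers both the case lim_{T→∞}(ln φ(T))/T = k for a constant k ∈ (0,∞) and the case lim_{T→∞}(ln φ(T))/T = ∞). Then for every a > 0, lim_{T→∞} (1/(φ(T)·ln φ(T))) · ln( Σ_{k=0}^{⌊aφ(T)⌋} φ(T)^k · e^{−T/2} (T/2)^k / k! ) = 0. -/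
open Filter Real Finset

set_option maxHeartbeats 2000000

private lemma fact_aux (k d : ℕ) : (k + d).factorial ≤ k.factorial * (k + d) ^ d := by
  induction d with
  | zero => simp
  | succ d ih =>
    have h1 : (k + (d + 1)).factorial = (k + d + 1) * (k + d).factorial := by
      rw [← Nat.add_assoc]; exact Nat.factorial_succ _
    rw [h1]
    calc (k + d + 1) * (k + d).factorial
        ≤ (k + d + 1) * (k.factorial * (k + d) ^ d) := Nat.mul_le_mul_left _ ih
      _ ≤ (k + d + 1) * (k.factorial * (k + d + 1) ^ d) :=
          Nat.mul_le_mul_left _ (Nat.mul_le_mul_left _ (Nat.pow_le_pow_left (Nat.le_succ _) d))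
      _ = k.factorial * (k + d + 1) ^ (d + 1) := by ring
      _ = k.factorial * (k + (d + 1)) ^ (d + 1) := by ring_nf

private lemma term_mono {x : ℝ} {k N : ℕ} (hk : k ≤ N) (hx : (N : ℝ) ≤ x) :
    x ^ k / k.factorial ≤ x ^ N / N.factorial := by
  have hx0 : 0 ≤ x := le_trans (Nat.cast_nonneg N) hx
  obtain ⟨d, rfl⟩ := Nat.exists_eq_add_of_le hk
  have hfac : (((k + d).factorial : ℝ)) ≤ (k.factorial : ℝ) * ((k + d : ℕ) : ℝ) ^ d := by
    exact_mod_cast fact_aux k d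
  have h2 : (((k + d : ℕ) : ℝ)) ^ d ≤ x ^ d := pow_le_pow_left₀ (Nat.cast_nonneg _) hx d
  rw [div_le_div_iff₀ (by positivity) (by positivity)]
  calc x ^ k * ((k + d).factorial : ℝ)
      ≤ x ^ k * ((k.factorial : ℝ) * ((k + d : ℕ) : ℝ) ^ d) := by
        apply mul_le_mul_of_nonneg_left hfac (by positivity)
    _ ≤ x ^ k * ((k.factorial : ℝ) * x ^ d) := by
        apply mul_le_mul_of_nonneg_left (mul_le_mul_of_nonneg_left h2 (by positivity)) (by positivity)
    _ = x ^ (k + d) * (k.factorial : ℝ) := by rw [pow_add]; ring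

private lemma log_fact_ge (N : ℕ) (hN : 1 ≤ N) :
    (N : ℝ) * Real.log N - N ≤ Real.log (N.factorial) := by
  have hN0 : (0 : ℝ) < N := by exact_mod_cast hN
  have h1 : ((N : ℝ)) ^ N / (N.factorial : ℝ) ≤ Real.exp N := by
    calc ((N : ℝ)) ^ N / (N.factorial : ℝ)
        ≤ ∑ i ∈ range (N + 1), ((N : ℝ)) ^ i / (i.factorial : ℝ) := by
          apply Finset.single_le_sum (f := fun i => ((N : ℝ)) ^ i / (i.factorial : ℝ))
            (fun i _ => by positivity) (self_mem_range_succ N)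
      _ ≤ Real.exp N := Real.sum_le_exp_of_nonneg (by positivity) _
  have h2 : ((N : ℝ)) ^ N ≤ (N.factorial : ℝ) * Real.exp N := by
    rw [div_le_iff₀ (by positivity)] at h1; linarith
  have h3 := Real.log_le_log (by positivity) h2
  rw [Real.log_pow, Real.log_mul (by positivity) (Real.exp_ne_zero _), Real.log_exp] at h3
  linarith

/-- If `φ(T) → ∞` and `liminf_{T→∞} ln φ(T) / T > 0` (i.e. eventually `ln φ(T)/T ≥ c` for
some `c > 0`), then for every `a > 0`,
`(1/(φ(T) ln φ(T))) ln( Σ_{k=0}^{⌊aφ(T)⌋} φ(T)^k e^{-T/2} (T/2)^k / k! ) → 0`. -/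
theorem stmt_7 (φ : ℝ → ℝ) (hφpos : ∀ T > (0:ℝ), 0 < φ T)
    (hφ : Filter.Tendsto φ Filter.atTop Filter.atTop)
    (hgrow : ∃ c > (0:ℝ), ∀ᶠ T in Filter.atTop, c ≤ Real.log (φ T) / T)
    (a : ℝ) (ha : 0 < a) :
    Filter.Tendsto (fun T : ℝ =>
      (1 / (φ T * Real.log (φ T))) *
        Real.log (∑ k ∈ Finset.range (⌊a * φ T⌋₊ + 1),
          (φ T) ^ k * Real.exp (-T/2) * (T/2) ^ k / (Nat.factorial k)))
      Filter.atTop (nhds 0) := by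
  obtain ⟨c, hc, hev⟩ := hgrow
  have hφinv : Tendsto (fun T => (φ T)⁻¹) atTop (nhds 0) := hφ.inv_tendsto_atTop
  have hlogT : Tendsto (fun T : ℝ => Real.log T / T) atTop (nhds 0) :=
    Real.isLittleO_log_id_atTop.tendsto_div_nhds_zero
  have hinvT : Tendsto (fun T : ℝ => T⁻¹) atTop (nhds 0) := tendsto_inv_atTop_zero
  apply tendsto_of_tendsto_of_tendsto_of_le_of_le'
    (g := fun T => -(1/(2*c)) * (φ T)⁻¹)
    (h := fun T => 2 * (φ T)⁻¹ + (a/c) * (Real.log T / T + (1 - Real.log a) * T⁻¹))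
  · simpa using hφinv.const_mul (-(1/(2*c)))
  · have h2 : Tendsto (fun T : ℝ => Real.log T / T + (1 - Real.log a) * T⁻¹) atTop (nhds 0) := by
      simpa using hlogT.add (hinvT.const_mul (1 - Real.log a))
    simpa using (hφinv.const_mul 2).add (h2.const_mul (a/c))
  · -- lower bound
    filter_upwards [hev, eventually_ge_atTop (1:ℝ)] with T h1 hT1
    have hT0 : (0:ℝ) < T := by linarith
    have hp0 : 0 < φ T := hφpos T hT0
    set p := φ T with hpdef
    have hcT : c * T ≤ Real.log p := by
      rw [← le_div_iff₀ hT0]; exact h1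
    have hlp : 0 < Real.log p := lt_of_lt_of_le (by positivity) hcT
    set N := ⌊a * p⌋₊ with hNdef
    have hterm : (∑ k ∈ range (N + 1), p ^ k * Real.exp (-T/2) * (T/2) ^ k / (k.factorial : ℝ))
        = ∑ k ∈ range (N + 1), Real.exp (-T/2) * ((p * (T/2)) ^ k / (k.factorial : ℝ)) :=
      Finset.sum_congr rfl fun k _ => by rw [mul_pow]; ring
    have hS1 : Real.exp (-T/2) ≤
        ∑ k ∈ range (N + 1), p ^ k * Real.exp (-T/2) * (T/2) ^ k / (k.factorial : ℝ) := by
      rw [hterm]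
      have := Finset.single_le_sum
        (f := fun k => Real.exp (-T/2) * ((p * (T/2)) ^ k / (k.factorial : ℝ)))
        (fun i _ => by positivity) (Finset.mem_range.mpr (Nat.succ_pos N))
      simpa using this
    have hlogS : -T/2 ≤ Real.log (∑ k ∈ range (N + 1),
        p ^ k * Real.exp (-T/2) * (T/2) ^ k / (k.factorial : ℝ)) := by
      have := Real.log_le_log (Real.exp_pos (-T/2)) hS1
      rwa [Real.log_exp] at this
    have hM : (0:ℝ) < p * Real.log p := by positivity
    have step1 : 1 / (p * Real.log p) * (-T/2) ≤ 1 / (p * Real.log p) *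
        Real.log (∑ k ∈ range (N + 1),
          p ^ k * Real.exp (-T/2) * (T/2) ^ k / (k.factorial : ℝ)) := by
      apply mul_le_mul_of_nonneg_left (by linarith) (by positivity)
    have step0 : -(1/(2*c)) * p⁻¹ ≤ 1 / (p * Real.log p) * (-T/2) := by
      have e1 : -(1/(2*c)) * p⁻¹ = -(1/(2*c*p)) := by ring
      have e2 : 1 / (p * Real.log p) * (-T/2) = -(T/(2*(p * Real.log p))) := by ring
      rw [e1, e2, neg_le_neg_iff, div_le_div_iff₀ (by positivity) (by positivity)]
      nlinarith [mul_le_mul_of_nonneg_left hcT (by positivity : (0:ℝ) ≤ 2*p)]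
    exact step0.trans step1
  · -- upper bound
    filter_upwards [hev, eventually_ge_atTop (1:ℝ), eventually_ge_atTop (2*a),
      hφ.eventually_ge_atTop (2/a), hφ.eventually_ge_atTop 1,
      (Real.tendsto_log_atTop.comp hφ).eventually_ge_atTop (Real.log (a+1))]
      with T h1 hT1 hT2a hp2a hp1 hla
    have hT0 : (0:ℝ) < T := by linarith
    have hp0 : 0 < φ T := hφpos T hT0
    set p := φ T with hpdef
    have hcT : c * T ≤ Real.log p := by
      rw [← le_div_iff₀ hT0]; exact h1
    have hlp : 0 < Real.log p := lt_of_lt_of_le (by positivity) hcT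
    set N := ⌊a * p⌋₊ with hNdef
    set x := p * (T/2) with hxdef
    have hap2 : (2:ℝ) ≤ a * p := by
      calc (2:ℝ) = a * (2/a) := by field_simp
        _ ≤ a * p := mul_le_mul_of_nonneg_left hp2a ha.le
    have hN2 : 2 ≤ N := Nat.le_floor (by exact_mod_cast hap2)
    have hNR : (2:ℝ) ≤ (N:ℝ) := by exact_mod_cast hN2
    have hNle : (N:ℝ) ≤ a * p := Nat.floor_le (by positivity)
    have hNge : a * p / 2 ≤ (N:ℝ) := by
      have := Nat.sub_one_lt_floor (a * p)
      rw [← hNdef] at this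
      linarith
    have hxN : (N:ℝ) ≤ x := by
      have : p * a ≤ p * (T/2) := mul_le_mul_of_nonneg_left (by linarith) hp0.le
      nlinarith
    have hx0 : 0 < x := by positivity
    have hterm : (∑ k ∈ range (N + 1), p ^ k * Real.exp (-T/2) * (T/2) ^ k / (k.factorial : ℝ))
        = ∑ k ∈ range (N + 1), Real.exp (-T/2) * (x ^ k / (k.factorial : ℝ)) :=
      Finset.sum_congr rfl fun k _ => by rw [mul_pow]; ring
    have hSpos : 0 < ∑ k ∈ range (N + 1),
        p ^ k * Real.exp (-T/2) * (T/2) ^ k / (k.factorial : ℝ) := by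
      rw [hterm]
      exact Finset.sum_pos (fun i _ => by positivity) Finset.nonempty_range_add_one
    have hSle : (∑ k ∈ range (N + 1), p ^ k * Real.exp (-T/2) * (T/2) ^ k / (k.factorial : ℝ))
        ≤ ((N:ℝ) + 1) * (Real.exp (-T/2) * (x ^ N / (N.factorial : ℝ))) := by
      rw [hterm]
      calc ∑ k ∈ range (N + 1), Real.exp (-T/2) * (x ^ k / (k.factorial : ℝ))
          ≤ ∑ _k ∈ range (N + 1), Real.exp (-T/2) * (x ^ N / (N.factorial : ℝ)) := by
            apply Finset.sum_le_sum
            intro k hk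
            exact mul_le_mul_of_nonneg_left
              (term_mono (Nat.lt_succ_iff.mp (Finset.mem_range.mp hk)) hxN) (Real.exp_pos _).le
        _ = ((N:ℝ) + 1) * (Real.exp (-T/2) * (x ^ N / (N.factorial : ℝ))) := by
            rw [Finset.sum_const, Finset.card_range, nsmul_eq_mul]
            push_cast; ring
    have hlogS_le : Real.log (∑ k ∈ range (N + 1),
        p ^ k * Real.exp (-T/2) * (T/2) ^ k / (k.factorial : ℝ))
        ≤ Real.log ((N:ℝ) + 1) + ((N:ℝ) * Real.log x - Real.log (N.factorial : ℝ)) := by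
      have h0 := Real.log_le_log hSpos hSle
      rw [Real.log_mul (by positivity) (by positivity),
        Real.log_mul (Real.exp_ne_zero _) (by positivity),
        Real.log_exp, Real.log_div (by positivity) (by positivity), Real.log_pow] at h0
      push_cast at h0
      linarith
    have hst : (N:ℝ) * Real.log N - (N:ℝ) ≤ Real.log (N.factorial : ℝ) :=
      log_fact_ge N (by omega)
    have hL0 : 0 ≤ Real.log T - Real.log a + 1 := by
      have : Real.log a ≤ Real.log T := Real.log_le_log ha (by linarith)
      linarith
    have hlx : Real.log x - Real.log (N:ℝ) ≤ Real.log T - Real.log a := by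
      have hxle : x / (N:ℝ) ≤ T / a := by
        rw [div_le_div_iff₀ (by positivity) ha]
        nlinarith
      calc Real.log x - Real.log (N:ℝ) = Real.log (x / (N:ℝ)) := by
            rw [Real.log_div hx0.ne' (by positivity)]
        _ ≤ Real.log (T / a) := Real.log_le_log (by positivity) hxle
        _ = Real.log T - Real.log a := Real.log_div hT0.ne' ha.ne'
    have hla' : Real.log (a + 1) ≤ Real.log p := hla
    have c1 : Real.log ((N:ℝ) + 1) ≤ 2 * Real.log p := by
      have hN1p : (N:ℝ) + 1 ≤ (a + 1) * p := by nlinarith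
      calc Real.log ((N:ℝ) + 1) ≤ Real.log ((a + 1) * p) :=
            Real.log_le_log (by positivity) hN1p
        _ = Real.log (a + 1) + Real.log p := Real.log_mul (by positivity) hp0.ne'
        _ ≤ 2 * Real.log p := by linarith
    have c2 : (N:ℝ) * Real.log x - Real.log (N.factorial : ℝ)
        ≤ a * p * (Real.log T - Real.log a + 1) := by
      have d1 : (N:ℝ) * Real.log x - Real.log (N.factorial : ℝ)
          ≤ (N:ℝ) * (Real.log x - Real.log (N:ℝ) + 1) := by linarith
      have d2 : (N:ℝ) * (Real.log x - Real.log (N:ℝ) + 1)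
          ≤ (N:ℝ) * (Real.log T - Real.log a + 1) :=
        mul_le_mul_of_nonneg_left (by linarith) (by positivity)
      have d3 : (N:ℝ) * (Real.log T - Real.log a + 1)
          ≤ a * p * (Real.log T - Real.log a + 1) :=
        mul_le_mul_of_nonneg_right hNle hL0
      linarith
    have hchain : Real.log (∑ k ∈ range (N + 1),
        p ^ k * Real.exp (-T/2) * (T/2) ^ k / (k.factorial : ℝ))
        ≤ 2 * Real.log p + a * p * (Real.log T - Real.log a + 1) := by linarith
    have f1 : 1 / (p * Real.log p) * Real.log (∑ k ∈ range (N + 1),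
        p ^ k * Real.exp (-T/2) * (T/2) ^ k / (k.factorial : ℝ))
        ≤ 1 / (p * Real.log p) *
          (2 * Real.log p + a * p * (Real.log T - Real.log a + 1)) :=
      mul_le_mul_of_nonneg_left hchain (by positivity)
    have f2 : 1 / (p * Real.log p) * (2 * Real.log p + a * p * (Real.log T - Real.log a + 1))
        = 2 * p⁻¹ + (a * (Real.log T - Real.log a + 1)) / Real.log p := by
      field_simp
    have f3 : (a * (Real.log T - Real.log a + 1)) / Real.log p
        ≤ (a * (Real.log T - Real.log a + 1)) / (c * T) := by
      rw [div_le_div_iff₀ (by positivity) (by positivity)]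
      exact mul_le_mul_of_nonneg_left hcT (mul_nonneg ha.le hL0)
    have f4 : (a * (Real.log T - Real.log a + 1)) / (c * T)
        = (a/c) * (Real.log T / T + (1 - Real.log a) * T⁻¹) := by
      ring
    calc 1 / (p * Real.log p) * Real.log (∑ k ∈ range (N + 1),
        p ^ k * Real.exp (-T/2) * (T/2) ^ k / (k.factorial : ℝ))
        ≤ 2 * p⁻¹ + (a * (Real.log T - Real.log a + 1)) / Real.log p := by rw [← f2]; exact f1
      _ ≤ 2 * p⁻¹ + (a * (Real.log T - Real.log a + 1)) / (c * T) := by linarith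
      _ = 2 * p⁻¹ + (a/c) * (Real.log T / T + (1 - Real.log a) * T⁻¹) := by rw [f4]
end

section
/- Let φ:(0,∞)→(0,∞) satisfy lim_{T→∞} φ(T) = ∞ and liminf_{T→∞} (ln φ(T))/T > 0 (this covers both the case lim_{T→∞}(ln φ(T))/T = k for a constant k ∈ (0,∞) and the case lim_{T→∞}(ln φ(T))/T = ∞). Then for all constants c > 0, b > 0 and l ∈ [0,1), limsup_{T→∞} (1/(φ(T)·ln φ(T))) · ln( Σ_{k=⌊bφ(T)⌋}^{∞} (c·φ(T)^l)^k · e^{−T/2} (T/2)^k / k! ) ≤ −(1−l)·b, where the infinite series converges for every T. -/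
open Filter Real Topology
section auxsec
open Nat

lemma aux_tail_summable (y : ℝ) (N : ℕ) :
    Summable (fun k : ℕ => y ^ (N + k) / ((N + k)! : ℝ)) :=
  (Real.summable_pow_div_factorial y).comp_injective (add_right_injective N)

lemma aux_tail_bound {y : ℝ} (hy : 0 ≤ y) (N : ℕ) :
    ∑' k : ℕ, y ^ (N + k) / ((N + k)! : ℝ) ≤ y ^ N / N ! * Real.exp y := by
  have hs := aux_tail_summable y N
  have hs2 : Summable (fun k : ℕ => y ^ N / N ! * (y ^ k / k !)) :=
    (Real.summable_pow_div_factorial y).mul_left _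
  have hterm : ∀ k : ℕ, y ^ (N + k) / ((N + k)! : ℝ) ≤ y ^ N / N ! * (y ^ k / k !) := by
    intro k
    have hcast : ((N ! : ℝ) * (k ! : ℝ)) ≤ ((N + k)! : ℝ) := by
      exact_mod_cast Nat.le_of_dvd (N + k).factorial_pos
        (Nat.factorial_mul_factorial_dvd_factorial_add N k)
    calc y ^ (N + k) / ((N + k)! : ℝ)
        ≤ y ^ (N + k) / ((N ! : ℝ) * (k ! : ℝ)) := by
          apply div_le_div_of_nonneg_left (by positivity) (by positivity) hcast
      _ = y ^ N / N ! * (y ^ k / k !) := by rw [pow_add]; ring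
  calc ∑' k : ℕ, y ^ (N + k) / ((N + k)! : ℝ)
      ≤ ∑' k : ℕ, y ^ N / N ! * (y ^ k / k !) := Summable.tsum_le_tsum hterm hs hs2
    _ = y ^ N / N ! * ∑' k : ℕ, y ^ k / (k ! : ℝ) := tsum_mul_left
    _ ≤ y ^ N / N ! * Real.exp y := by
        apply mul_le_mul_of_nonneg_left _ (by positivity)
        exact Real.tsum_le_of_sum_range_le (fun n => by positivity)
          (fun n => Real.sum_le_exp_of_nonneg hy n)

lemma aux_log_factorial_lower (n : ℕ) : (n : ℝ) * Real.log n - n ≤ Real.log (n !) := by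
  rcases n with _ | m
  · simp
  set n := m + 1
  have hn : (0:ℝ) < n := by positivity
  have h := Real.pow_div_factorial_le_exp (x := (n:ℝ)) (Nat.cast_nonneg n) n
  have hfac : (0:ℝ) < (n ! : ℝ) := by exact_mod_cast n.factorial_pos
  have h2 : (n:ℝ) ^ n ≤ (n ! : ℝ) * Real.exp n := by
    rw [div_le_iff₀ hfac] at h; linarith
  have h3 : Real.log ((n:ℝ) ^ n) ≤ Real.log ((n ! : ℝ) * Real.exp n) :=
    Real.log_le_log (by positivity) h2
  rw [Real.log_pow, Real.log_mul (ne_of_gt hfac) (Real.exp_ne_zero _), Real.log_exp] at h3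
  linarith

lemma aux_log_factorial_upper (n : ℕ) : Real.log (n !) ≤ (n : ℝ) * Real.log n := by
  have hfac : (0:ℝ) < (n ! : ℝ) := by exact_mod_cast n.factorial_pos
  have h2 : (n ! : ℝ) ≤ (n : ℝ) ^ n := by exact_mod_cast n.factorial_le_pow
  calc Real.log (n !) ≤ Real.log ((n:ℝ) ^ n) := Real.log_le_log hfac h2
    _ = n * Real.log n := Real.log_pow n n

end auxsec

set_option maxHeartbeats 2000000

/-- If `φ(T) → ∞` and `liminf_{T→∞} ln φ(T) / T > 0` (i.e. eventually `ln φ(T)/T ≥ c` for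
some `c > 0`), then for `c > 0`, `b > 0`, `l ∈ [0,1)`, the series
`Σ_{k=⌊bφ(T)⌋}^∞ (c φ(T)^l)^k e^{-T/2} (T/2)^k / k!` converges for every `T > 0` and
`limsup_{T→∞} (1/(φ(T) ln φ(T))) ln(series) ≤ -(1-l) b`. -/
theorem stmt_8 (φ : ℝ → ℝ) (hφpos : ∀ T > (0:ℝ), 0 < φ T)
    (hφ : Filter.Tendsto φ Filter.atTop Filter.atTop)
    (hgrow : ∃ c > (0:ℝ), ∀ᶠ T in Filter.atTop, c ≤ Real.log (φ T) / T)
    (c b l : ℝ) (hc : 0 < c) (hb : 0 < b) (hl : l ∈ Set.Ico (0:ℝ) 1) :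
    (∀ T > (0:ℝ), Summable (fun k : ℕ =>
      (c * (φ T) ^ l) ^ (⌊b * φ T⌋₊ + k) * Real.exp (-T/2) * (T/2) ^ (⌊b * φ T⌋₊ + k)
        / (Nat.factorial (⌊b * φ T⌋₊ + k)))) ∧
    Filter.limsup (fun T : ℝ =>
      (1 / (φ T * Real.log (φ T))) *
        Real.log (∑' k : ℕ,
          (c * (φ T) ^ l) ^ (⌊b * φ T⌋₊ + k) * Real.exp (-T/2) * (T/2) ^ (⌊b * φ T⌋₊ + k)
            / (Nat.factorial (⌊b * φ T⌋₊ + k))))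
      Filter.atTop ≤ -(1 - l) * b := by
  obtain ⟨hl0, hl1⟩ := hl
  obtain ⟨c₀, hc₀, hgr⟩ := hgrow
  have hterm_rw : ∀ T : ℝ, (fun k : ℕ =>
      (c * (φ T) ^ l) ^ (⌊b * φ T⌋₊ + k) * Real.exp (-T/2) * (T/2) ^ (⌊b * φ T⌋₊ + k)
        / (Nat.factorial (⌊b * φ T⌋₊ + k)))
      = fun k : ℕ => Real.exp (-T/2) *
          ((c * (φ T) ^ l * (T/2)) ^ (⌊b * φ T⌋₊ + k) / (Nat.factorial (⌊b * φ T⌋₊ + k) : ℝ)) := by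
    intro T; funext k; rw [mul_pow]; ring
  have hsum : ∀ T : ℝ, Summable (fun k : ℕ =>
      (c * (φ T) ^ l) ^ (⌊b * φ T⌋₊ + k) * Real.exp (-T/2) * (T/2) ^ (⌊b * φ T⌋₊ + k)
        / (Nat.factorial (⌊b * φ T⌋₊ + k))) := by
    intro T; rw [hterm_rw T]; exact (aux_tail_summable _ _).mul_left _
  refine ⟨fun T _ => hsum T, ?_⟩
  set D : ℝ := Real.log c - Real.log b with hD_def
  set K : ℝ := b * (l - 1) - b * |D| - 1 with hK_def
  set g : ℝ → ℝ := fun T =>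
    (c * φ T ^ l * (T/2)
      + (⌊b * φ T⌋₊ : ℝ) * (Real.log (c * φ T ^ l * (T/2)) - Real.log (⌊b * φ T⌋₊ : ℝ))
      + (⌊b * φ T⌋₊ : ℝ)) / (φ T * Real.log (φ T)) with hg_def
  -- base eventual facts
  have hbase : ∀ᶠ T in atTop, 0 < T ∧ 2 ≤ T ∧ c₀ * T ≤ Real.log (φ T) ∧ 1 ≤ φ T ∧
      1 ≤ Real.log (φ T) ∧ 2 ≤ b * φ T ∧ 1 ≤ (⌊b * φ T⌋₊ : ℝ) ∧ (⌊b * φ T⌋₊ : ℝ) ≤ b * φ T ∧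
      b * φ T - 1 < (⌊b * φ T⌋₊ : ℝ) ∧ 1 ≤ c * φ T ^ l * (T/2) ∧ b ≤ c * (T/2) ∧
      (l - 1) * Real.log (φ T) + D ≤ 0 ∧ T ≤ 2 * (φ T * Real.log (φ T)) := by
    have hTc : ∀ᶠ T in atTop, c₀ * T ≤ Real.log (φ T) := by
      filter_upwards [hgr, eventually_gt_atTop (0:ℝ)] with T h hT
      rw [le_div_iff₀ hT] at h; linarith
    filter_upwards [eventually_ge_atTop (2:ℝ), eventually_ge_atTop (2/c + 2*b/c), hTc,
      hφ.eventually_ge_atTop (1:ℝ), hφ.eventually_ge_atTop (2/b),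
      hφ.eventually_ge_atTop (1/(2*c₀)), hφ.eventually_ge_atTop (Real.exp 1),
      hφ.eventually_ge_atTop (Real.exp (D/(1-l)))]
      with T hT2 hTcb hT_L hP1 hP2b hPhalf hPe hPD
    have hT0 : (0:ℝ) < T := by linarith
    have hP0 : (0:ℝ) < φ T := by linarith
    have hL1 : 1 ≤ Real.log (φ T) := by
      have := Real.log_le_log (Real.exp_pos 1) hPe
      rwa [Real.log_exp] at this
    have hL0 : (0:ℝ) < Real.log (φ T) := by linarith
    have hbP2 : 2 ≤ b * φ T := by
      rw [div_le_iff₀ hb] at hP2b; linarith [hP2b]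
    have hNN1 : 1 ≤ (⌊b * φ T⌋₊ : ℝ) := by
      have : (1:ℕ) ≤ ⌊b * φ T⌋₊ := Nat.le_floor (by push_cast; linarith)
      exact_mod_cast this
    have hNNle : (⌊b * φ T⌋₊ : ℝ) ≤ b * φ T := Nat.floor_le (by linarith)
    have hNNgt : b * φ T - 1 < (⌊b * φ T⌋₊ : ℝ) := Nat.sub_one_lt_floor _
    have hrpow1 : (1:ℝ) ≤ φ T ^ l := Real.one_le_rpow hP1 hl0
    have hcT : 1 ≤ c * (T/2) := by
      have h1 : 2/c ≤ T := by
        have : 0 ≤ 2*b/c := by positivity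
        linarith
      rw [div_le_iff₀ hc] at h1
      nlinarith
    have hcTb : b ≤ c * (T/2) := by
      have h1 : 2*b/c ≤ T := by
        have : 0 ≤ 2/c := by positivity
        linarith
      rw [div_le_iff₀ hc] at h1
      nlinarith
    have hy1 : 1 ≤ c * φ T ^ l * (T/2) := by nlinarith
    have hmu : (l - 1) * Real.log (φ T) + D ≤ 0 := by
      have h1 : D/(1-l) ≤ Real.log (φ T) := by
        have := Real.log_le_log (Real.exp_pos _) hPD
        rwa [Real.log_exp] at this
      rw [div_le_iff₀ (by linarith : (0:ℝ) < 1 - l)] at h1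
      nlinarith
    have hT2PL : T ≤ 2 * (φ T * Real.log (φ T)) := by
      have h1 : 1/(2*c₀) * Real.log (φ T) ≤ φ T * Real.log (φ T) :=
        mul_le_mul_of_nonneg_right hPhalf (by linarith)
      have h2 : c₀ * T ≤ c₀ * (2 * (φ T * Real.log (φ T))) := by
        calc c₀ * T ≤ Real.log (φ T) := hT_L
          _ = c₀ * (2 * (1/(2*c₀) * Real.log (φ T))) := by field_simp
          _ ≤ c₀ * (2 * (φ T * Real.log (φ T))) :=
            mul_le_mul_of_nonneg_left (mul_le_mul_of_nonneg_left h1 (by norm_num)) hc₀.le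
      exact le_of_mul_le_mul_left h2 hc₀
    exact ⟨hT0, hT2, hT_L, hP1, hL1, hbP2, hNN1, hNNle, hNNgt, hy1, hcTb, hmu, hT2PL⟩
  have hNfac : ∀ m : ℕ, (0:ℝ) < (Nat.factorial m : ℝ) := fun m => by
    exact_mod_cast m.factorial_pos
  have hSrw : ∀ T : ℝ, (∑' k : ℕ,
      (c * (φ T) ^ l) ^ (⌊b * φ T⌋₊ + k) * Real.exp (-T/2) * (T/2) ^ (⌊b * φ T⌋₊ + k)
        / (Nat.factorial (⌊b * φ T⌋₊ + k)))
      = Real.exp (-T/2) * ∑' k : ℕ,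
          (c * φ T ^ l * (T/2)) ^ (⌊b * φ T⌋₊ + k) / ((⌊b * φ T⌋₊ + k).factorial : ℝ) := by
    intro T; rw [hterm_rw T]; exact tsum_mul_left
  -- upper bound : f ≤ g eventually
  have hle : ∀ᶠ T in atTop,
      1 / (φ T * Real.log (φ T)) *
        Real.log (∑' k : ℕ,
          (c * (φ T) ^ l) ^ (⌊b * φ T⌋₊ + k) * Real.exp (-T/2) * (T/2) ^ (⌊b * φ T⌋₊ + k)
            / (Nat.factorial (⌊b * φ T⌋₊ + k))) ≤ g T := by
    filter_upwards [hbase] with T hT'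
    obtain ⟨hT0, hT2, hT_L, hP1, hL1, hbP2, hNN1, hNNle, hNNgt, hy1, hcTb, hmu, hT2PL⟩ := hT'
    have hP0 : (0:ℝ) < φ T := by linarith
    have hL0 : (0:ℝ) < Real.log (φ T) := by linarith
    have hPL : (0:ℝ) < φ T * Real.log (φ T) := mul_pos hP0 hL0
    have hy0 : (0:ℝ) < c * φ T ^ l * (T/2) := by linarith
    have htail_pos : (0:ℝ) < ∑' k : ℕ,
        (c * φ T ^ l * (T/2)) ^ (⌊b * φ T⌋₊ + k) / ((⌊b * φ T⌋₊ + k).factorial : ℝ) :=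
      Summable.tsum_pos (aux_tail_summable _ _)
        (fun k => div_nonneg (pow_nonneg hy0.le _) (hNfac _).le) 0
        (div_pos (pow_pos hy0 _) (hNfac _))
    have hS_pos : (0:ℝ) < ∑' k : ℕ,
        (c * (φ T) ^ l) ^ (⌊b * φ T⌋₊ + k) * Real.exp (-T/2) * (T/2) ^ (⌊b * φ T⌋₊ + k)
          / (Nat.factorial (⌊b * φ T⌋₊ + k)) := by
      rw [hSrw T]; exact mul_pos (Real.exp_pos _) htail_pos
    have hup : (∑' k : ℕ,
        (c * (φ T) ^ l) ^ (⌊b * φ T⌋₊ + k) * Real.exp (-T/2) * (T/2) ^ (⌊b * φ T⌋₊ + k)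
          / (Nat.factorial (⌊b * φ T⌋₊ + k)))
        ≤ Real.exp (-T/2) * ((c * φ T ^ l * (T/2)) ^ ⌊b * φ T⌋₊ / ((⌊b * φ T⌋₊).factorial : ℝ)
            * Real.exp (c * φ T ^ l * (T/2))) := by
      rw [hSrw T]
      exact mul_le_mul_of_nonneg_left (aux_tail_bound hy0.le _) (Real.exp_pos _).le
    have hdiv_pos : (0:ℝ) < (c * φ T ^ l * (T/2)) ^ ⌊b * φ T⌋₊ / ((⌊b * φ T⌋₊).factorial : ℝ) :=
      div_pos (pow_pos hy0 _) (hNfac _)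
    have hlog : Real.log (∑' k : ℕ,
        (c * (φ T) ^ l) ^ (⌊b * φ T⌋₊ + k) * Real.exp (-T/2) * (T/2) ^ (⌊b * φ T⌋₊ + k)
          / (Nat.factorial (⌊b * φ T⌋₊ + k)))
        ≤ -T/2 + ((⌊b * φ T⌋₊ : ℝ) * Real.log (c * φ T ^ l * (T/2))
            - Real.log ((⌊b * φ T⌋₊).factorial : ℝ)) + (c * φ T ^ l * (T/2)) := by
      have h1 := Real.log_le_log hS_pos hup
      rw [Real.log_mul (Real.exp_ne_zero _) (mul_pos hdiv_pos (Real.exp_pos _)).ne',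
        Real.log_exp, Real.log_mul hdiv_pos.ne' (Real.exp_ne_zero _), Real.log_exp,
        Real.log_div (pow_ne_zero _ hy0.ne') (hNfac _).ne', Real.log_pow] at h1
      linarith
    have hfac_low := aux_log_factorial_lower ⌊b * φ T⌋₊
    have hlog2 : Real.log (∑' k : ℕ,
        (c * (φ T) ^ l) ^ (⌊b * φ T⌋₊ + k) * Real.exp (-T/2) * (T/2) ^ (⌊b * φ T⌋₊ + k)
          / (Nat.factorial (⌊b * φ T⌋₊ + k)))
        ≤ c * φ T ^ l * (T/2)
          + (⌊b * φ T⌋₊ : ℝ) * (Real.log (c * φ T ^ l * (T/2)) - Real.log (⌊b * φ T⌋₊ : ℝ))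
          + (⌊b * φ T⌋₊ : ℝ) := by
      have hT20 : -T/2 ≤ 0 := by linarith
      have hexp : ((⌊b * φ T⌋₊ : ℝ)) * (Real.log (c * φ T ^ l * (T/2)) - Real.log (⌊b * φ T⌋₊ : ℝ))
          = (⌊b * φ T⌋₊ : ℝ) * Real.log (c * φ T ^ l * (T/2))
            - (⌊b * φ T⌋₊ : ℝ) * Real.log (⌊b * φ T⌋₊ : ℝ) := by ring
      linarith [hlog, hfac_low]
    calc 1 / (φ T * Real.log (φ T)) *
        Real.log (∑' k : ℕ,
          (c * (φ T) ^ l) ^ (⌊b * φ T⌋₊ + k) * Real.exp (-T/2) * (T/2) ^ (⌊b * φ T⌋₊ + k)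
            / (Nat.factorial (⌊b * φ T⌋₊ + k)))
        ≤ 1 / (φ T * Real.log (φ T)) *
          (c * φ T ^ l * (T/2)
            + (⌊b * φ T⌋₊ : ℝ) * (Real.log (c * φ T ^ l * (T/2)) - Real.log (⌊b * φ T⌋₊ : ℝ))
            + (⌊b * φ T⌋₊ : ℝ)) := by
          exact mul_le_mul_of_nonneg_left hlog2 (by positivity)
      _ = g T := by simp only [hg_def]; ring
  -- lower bound : K ≤ f eventually
  have hKle : ∀ᶠ T in atTop, K ≤
      1 / (φ T * Real.log (φ T)) *
        Real.log (∑' k : ℕ,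
          (c * (φ T) ^ l) ^ (⌊b * φ T⌋₊ + k) * Real.exp (-T/2) * (T/2) ^ (⌊b * φ T⌋₊ + k)
            / (Nat.factorial (⌊b * φ T⌋₊ + k))) := by
    filter_upwards [hbase] with T hT'
    obtain ⟨hT0, hT2, hT_L, hP1, hL1, hbP2, hNN1, hNNle, hNNgt, hy1, hcTb, hmu, hT2PL⟩ := hT'
    have hP0 : (0:ℝ) < φ T := by linarith
    have hL0 : (0:ℝ) < Real.log (φ T) := by linarith
    have hPL : (0:ℝ) < φ T * Real.log (φ T) := mul_pos hP0 hL0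
    have hy0 : (0:ℝ) < c * φ T ^ l * (T/2) := by linarith
    have hrpow0 : (0:ℝ) < φ T ^ l := Real.rpow_pos_of_pos hP0 l
    have hS_pos : (0:ℝ) < ∑' k : ℕ,
        (c * (φ T) ^ l) ^ (⌊b * φ T⌋₊ + k) * Real.exp (-T/2) * (T/2) ^ (⌊b * φ T⌋₊ + k)
          / (Nat.factorial (⌊b * φ T⌋₊ + k)) := by
      rw [hSrw T]
      exact mul_pos (Real.exp_pos _) (Summable.tsum_pos (aux_tail_summable _ _)
        (fun k => div_nonneg (pow_nonneg hy0.le _) (hNfac _).le) 0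
        (div_pos (pow_pos hy0 _) (hNfac _)))
    have hfirst_pos : (0:ℝ) < Real.exp (-T/2) *
        ((c * φ T ^ l * (T/2)) ^ ⌊b * φ T⌋₊ / ((⌊b * φ T⌋₊).factorial : ℝ)) :=
      mul_pos (Real.exp_pos _) (div_pos (pow_pos hy0 _) (hNfac _))
    have hge : Real.exp (-T/2) *
        ((c * φ T ^ l * (T/2)) ^ ⌊b * φ T⌋₊ / ((⌊b * φ T⌋₊).factorial : ℝ))
        ≤ ∑' k : ℕ,
          (c * (φ T) ^ l) ^ (⌊b * φ T⌋₊ + k) * Real.exp (-T/2) * (T/2) ^ (⌊b * φ T⌋₊ + k)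
            / (Nat.factorial (⌊b * φ T⌋₊ + k)) := by
      rw [hSrw T]
      apply mul_le_mul_of_nonneg_left _ (Real.exp_pos _).le
      have h0 := Summable.le_tsum (aux_tail_summable (c * φ T ^ l * (T/2)) ⌊b * φ T⌋₊) 0
        (fun j _ => div_nonneg (pow_nonneg hy0.le _) (hNfac _).le)
      simpa using h0
    have hlogS_ge : -T/2 + ((⌊b * φ T⌋₊ : ℝ) * Real.log (c * φ T ^ l * (T/2))
        - Real.log ((⌊b * φ T⌋₊).factorial : ℝ))
        ≤ Real.log (∑' k : ℕ,
          (c * (φ T) ^ l) ^ (⌊b * φ T⌋₊ + k) * Real.exp (-T/2) * (T/2) ^ (⌊b * φ T⌋₊ + k)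
            / (Nat.factorial (⌊b * φ T⌋₊ + k))) := by
      have h1 := Real.log_le_log hfirst_pos hge
      rw [Real.log_mul (Real.exp_ne_zero _) (div_pos (pow_pos hy0 _) (hNfac _)).ne',
        Real.log_exp, Real.log_div (pow_ne_zero _ hy0.ne') (hNfac _).ne', Real.log_pow] at h1
      linarith
    have hfac_up := aux_log_factorial_upper ⌊b * φ T⌋₊
    have hlogy : Real.log (c * φ T ^ l * (T/2))
        = Real.log c + l * Real.log (φ T) + Real.log (T/2) := by
      rw [Real.log_mul (mul_pos hc hrpow0).ne' (by linarith : (T:ℝ)/2 ≠ 0),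
        Real.log_mul hc.ne' hrpow0.ne', Real.log_rpow hP0]
    have hlogT2 : 0 ≤ Real.log (T/2) := Real.log_nonneg (by linarith)
    have hlogN_le : Real.log (⌊b * φ T⌋₊ : ℝ) ≤ Real.log b + Real.log (φ T) := by
      have h2 := Real.log_le_log (by linarith : (0:ℝ) < (⌊b * φ T⌋₊ : ℝ)) hNNle
      rwa [Real.log_mul hb.ne' hP0.ne'] at h2
    have hΔ : (l - 1) * Real.log (φ T) + D
        ≤ Real.log (c * φ T ^ l * (T/2)) - Real.log (⌊b * φ T⌋₊ : ℝ) := by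
      rw [hD_def]; linarith
    have hNmul : b * φ T * ((l - 1) * Real.log (φ T) + D)
        ≤ (⌊b * φ T⌋₊ : ℝ) * (Real.log (c * φ T ^ l * (T/2)) - Real.log (⌊b * φ T⌋₊ : ℝ)) :=
      calc b * φ T * ((l - 1) * Real.log (φ T) + D)
          ≤ (⌊b * φ T⌋₊ : ℝ) * ((l - 1) * Real.log (φ T) + D) :=
            mul_le_mul_of_nonpos_right hNNle hmu
        _ ≤ (⌊b * φ T⌋₊ : ℝ) * (Real.log (c * φ T ^ l * (T/2)) - Real.log (⌊b * φ T⌋₊ : ℝ)) :=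
            mul_le_mul_of_nonneg_left hΔ (by linarith)
    have hlogS_ge2 : -T/2 + b * φ T * ((l - 1) * Real.log (φ T) + D)
        ≤ Real.log (∑' k : ℕ,
          (c * (φ T) ^ l) ^ (⌊b * φ T⌋₊ + k) * Real.exp (-T/2) * (T/2) ^ (⌊b * φ T⌋₊ + k)
            / (Nat.factorial (⌊b * φ T⌋₊ + k))) := by
      have hexp : ((⌊b * φ T⌋₊ : ℝ)) * (Real.log (c * φ T ^ l * (T/2)) - Real.log (⌊b * φ T⌋₊ : ℝ))
          = (⌊b * φ T⌋₊ : ℝ) * Real.log (c * φ T ^ l * (T/2))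
            - (⌊b * φ T⌋₊ : ℝ) * Real.log (⌊b * φ T⌋₊ : ℝ) := by ring
      linarith [hlogS_ge, hfac_up, hNmul]
    have habs : -|D| ≤ D := neg_abs_le D
    have e1 : -(φ T * Real.log (φ T)) ≤ -T/2 := by linarith
    have hφφL : φ T ≤ φ T * Real.log (φ T) := le_mul_of_one_le_right hP0.le hL1
    have e2 : b * |D| * φ T ≤ b * |D| * (φ T * Real.log (φ T)) :=
      mul_le_mul_of_nonneg_left hφφL (by positivity)
    have e3 : -(b * |D| * (φ T * Real.log (φ T))) ≤ b * D * φ T := by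
      have h4 : b * (-|D|) * φ T ≤ b * D * φ T :=
        mul_le_mul_of_nonneg_right (mul_le_mul_of_nonneg_left habs hb.le) hP0.le
      linarith [e2, h4]
    have hKPL : K * (φ T * Real.log (φ T))
        ≤ -T/2 + b * φ T * ((l - 1) * Real.log (φ T) + D) := by
      rw [hK_def]; nlinarith [e1, e3, hPL.le]
    have h5 : K ≤ Real.log (∑' k : ℕ,
        (c * (φ T) ^ l) ^ (⌊b * φ T⌋₊ + k) * Real.exp (-T/2) * (T/2) ^ (⌊b * φ T⌋₊ + k)
          / (Nat.factorial (⌊b * φ T⌋₊ + k))) / (φ T * Real.log (φ T)) :=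
      (le_div_iff₀ hPL).2 (le_trans hKPL hlogS_ge2)
    calc K ≤ Real.log (∑' k : ℕ,
        (c * (φ T) ^ l) ^ (⌊b * φ T⌋₊ + k) * Real.exp (-T/2) * (T/2) ^ (⌊b * φ T⌋₊ + k)
          / (Nat.factorial (⌊b * φ T⌋₊ + k))) / (φ T * Real.log (φ T)) := h5
      _ = 1 / (φ T * Real.log (φ T)) * Real.log (∑' k : ℕ,
          (c * (φ T) ^ l) ^ (⌊b * φ T⌋₊ + k) * Real.exp (-T/2) * (T/2) ^ (⌊b * φ T⌋₊ + k)
            / (Nat.factorial (⌊b * φ T⌋₊ + k))) := by ring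
  -- limit of g
  have hL8 : Tendsto (fun T => Real.log (φ T)) atTop atTop := Real.tendsto_log_atTop.comp hφ
  have hLinv : Tendsto (fun T => (Real.log (φ T))⁻¹) atTop (𝓝 0) := hL8.inv_tendsto_atTop
  have hPinv : Tendsto (fun T => (φ T)⁻¹) atTop (𝓝 0) := hφ.inv_tendsto_atTop
  have hA : Tendsto (fun T => c * φ T ^ l * (T/2) / (φ T * Real.log (φ T))) atTop (𝓝 0) := by
    have hub : ∀ᶠ T in atTop, c * φ T ^ l * (T/2) / (φ T * Real.log (φ T))
        ≤ (c/(2*c₀)) * φ T ^ (l-1) := by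
      filter_upwards [hbase] with T hT'
      obtain ⟨hT0, hT2, hT_L, hP1, hL1, hbP2, hNN1, hNNle, hNNgt, hy1, hcTb, hmu, hT2PL⟩ := hT'
      have hP0 : (0:ℝ) < φ T := by linarith
      have hL0 : (0:ℝ) < Real.log (φ T) := by linarith
      have hr0 : (0:ℝ) < φ T ^ (l-1) := Real.rpow_pos_of_pos hP0 _
      have hTdivL : T / Real.log (φ T) ≤ 1/c₀ := by
        rw [div_le_div_iff₀ hL0 hc₀]; linarith
      have hid : c * φ T ^ l * (T/2) / (φ T * Real.log (φ T))
          = (c * φ T ^ (l-1) / 2) * (T / Real.log (φ T)) := by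
        rw [Real.rpow_sub hP0, Real.rpow_one]; field_simp
      rw [hid]
      calc (c * φ T ^ (l-1) / 2) * (T / Real.log (φ T))
          ≤ (c * φ T ^ (l-1) / 2) * (1/c₀) := by
            apply mul_le_mul_of_nonneg_left hTdivL
            positivity
        _ = (c/(2*c₀)) * φ T ^ (l-1) := by ring
    have hlb : ∀ᶠ T in atTop, (0:ℝ) ≤ c * φ T ^ l * (T/2) / (φ T * Real.log (φ T)) := by
      filter_upwards [hbase] with T hT'
      obtain ⟨hT0, hT2, hT_L, hP1, hL1, hbP2, hNN1, hNNle, hNNgt, hy1, hcTb, hmu, hT2PL⟩ := hT'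
      have hP0 : (0:ℝ) < φ T := by linarith
      have hL0 : (0:ℝ) < Real.log (φ T) := by linarith
      have hy0 : (0:ℝ) < c * φ T ^ l * (T/2) := by linarith
      positivity
    have hrhs : Tendsto (fun T => (c/(2*c₀)) * φ T ^ (l-1)) atTop (𝓝 0) := by
      have h0 : Tendsto (fun x : ℝ => x ^ (l-1)) atTop (𝓝 0) := by
        have := tendsto_rpow_neg_atTop (by linarith : (0:ℝ) < 1 - l)
        simpa [show -(1-l) = l-1 by ring] using this
      have h1 := (h0.comp hφ).const_mul (c/(2*c₀))
      simpa [Function.comp] using h1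
    exact tendsto_of_tendsto_of_tendsto_of_le_of_le' tendsto_const_nhds hrhs hlb hub
  have hC : Tendsto (fun T => (⌊b * φ T⌋₊ : ℝ) / (φ T * Real.log (φ T))) atTop (𝓝 0) := by
    have hub : ∀ᶠ T in atTop, (⌊b * φ T⌋₊ : ℝ) / (φ T * Real.log (φ T))
        ≤ b * (Real.log (φ T))⁻¹ := by
      filter_upwards [hbase] with T hT'
      obtain ⟨hT0, hT2, hT_L, hP1, hL1, hbP2, hNN1, hNNle, hNNgt, hy1, hcTb, hmu, hT2PL⟩ := hT'
      have hP0 : (0:ℝ) < φ T := by linarith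
      have hL0 : (0:ℝ) < Real.log (φ T) := by linarith
      have hPL : (0:ℝ) < φ T * Real.log (φ T) := mul_pos hP0 hL0
      rw [div_le_iff₀ hPL]
      have hid : b * (Real.log (φ T))⁻¹ * (φ T * Real.log (φ T)) = b * φ T := by
        field_simp
      rw [hid]; exact hNNle
    have hlb : ∀ᶠ T in atTop, (0:ℝ) ≤ (⌊b * φ T⌋₊ : ℝ) / (φ T * Real.log (φ T)) := by
      filter_upwards [hbase] with T hT'
      obtain ⟨hT0, hT2, hT_L, hP1, hL1, hbP2, hNN1, hNNle, hNNgt, hy1, hcTb, hmu, hT2PL⟩ := hT'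
      have hP0 : (0:ℝ) < φ T := by linarith
      have hL0 : (0:ℝ) < Real.log (φ T) := by linarith
      positivity
    have hrhs : Tendsto (fun T => b * (Real.log (φ T))⁻¹) atTop (𝓝 0) := by
      have := hLinv.const_mul b
      simpa using this
    exact tendsto_of_tendsto_of_tendsto_of_le_of_le' tendsto_const_nhds hrhs hlb hub
  have hNb : Tendsto (fun T => (⌊b * φ T⌋₊ : ℝ) / φ T) atTop (𝓝 b) := by
    have hlbf : Tendsto (fun T => b - (φ T)⁻¹) atTop (𝓝 b) := by
      have := tendsto_const_nhds (x := b) (f := atTop (α := ℝ)) |>.sub hPinv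
      simpa using this
    have hlb : ∀ᶠ T in atTop, b - (φ T)⁻¹ ≤ (⌊b * φ T⌋₊ : ℝ) / φ T := by
      filter_upwards [hbase] with T hT'
      obtain ⟨hT0, hT2, hT_L, hP1, hL1, hbP2, hNN1, hNNle, hNNgt, hy1, hcTb, hmu, hT2PL⟩ := hT'
      have hP0 : (0:ℝ) < φ T := by linarith
      rw [le_div_iff₀ hP0]
      have hid : (b - (φ T)⁻¹) * φ T = b * φ T - 1 := by field_simp
      rw [hid]; linarith
    have hub : ∀ᶠ T in atTop, (⌊b * φ T⌋₊ : ℝ) / φ T ≤ b := by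
      filter_upwards [hbase] with T hT'
      obtain ⟨hT0, hT2, hT_L, hP1, hL1, hbP2, hNN1, hNNle, hNNgt, hy1, hcTb, hmu, hT2PL⟩ := hT'
      have hP0 : (0:ℝ) < φ T := by linarith
      rw [div_le_iff₀ hP0]; linarith
    exact tendsto_of_tendsto_of_tendsto_of_le_of_le' hlbf tendsto_const_nhds hlb hub
  have hlogNN : Tendsto (fun T => Real.log (⌊b * φ T⌋₊ : ℝ) / Real.log (φ T)) atTop (𝓝 1) := by
    have hlbf : Tendsto (fun T => Real.log (b/2) * (Real.log (φ T))⁻¹ + 1) atTop (𝓝 1) := by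
      have := (hLinv.const_mul (Real.log (b/2))).add (tendsto_const_nhds (x := (1:ℝ)))
      simpa using this
    have hubf : Tendsto (fun T => Real.log b * (Real.log (φ T))⁻¹ + 1) atTop (𝓝 1) := by
      have := (hLinv.const_mul (Real.log b)).add (tendsto_const_nhds (x := (1:ℝ)))
      simpa using this
    have hlb : ∀ᶠ T in atTop, Real.log (b/2) * (Real.log (φ T))⁻¹ + 1
        ≤ Real.log (⌊b * φ T⌋₊ : ℝ) / Real.log (φ T) := by
      filter_upwards [hbase] with T hT'
      obtain ⟨hT0, hT2, hT_L, hP1, hL1, hbP2, hNN1, hNNle, hNNgt, hy1, hcTb, hmu, hT2PL⟩ := hT'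
      have hP0 : (0:ℝ) < φ T := by linarith
      have hL0 : (0:ℝ) < Real.log (φ T) := by linarith
      have hNNhalf : b * φ T / 2 ≤ (⌊b * φ T⌋₊ : ℝ) := by linarith
      have h6 : Real.log (b/2) + Real.log (φ T) ≤ Real.log (⌊b * φ T⌋₊ : ℝ) := by
        have h7 := Real.log_le_log (by positivity : (0:ℝ) < b * φ T / 2) hNNhalf
        rw [show b * φ T / 2 = b/2 * φ T by ring,
          Real.log_mul (by positivity : (b:ℝ)/2 ≠ 0) hP0.ne'] at h7
        linarith
      have h8 : (Real.log (b/2) + Real.log (φ T)) / Real.log (φ T)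
          ≤ Real.log (⌊b * φ T⌋₊ : ℝ) / Real.log (φ T) := (div_le_div_iff_of_pos_right hL0).2 h6
      have hid : (Real.log (b/2) + Real.log (φ T)) / Real.log (φ T)
          = Real.log (b/2) * (Real.log (φ T))⁻¹ + 1 := by field_simp
      linarith [h8, hid ▸ h8]
    have hub : ∀ᶠ T in atTop, Real.log (⌊b * φ T⌋₊ : ℝ) / Real.log (φ T)
        ≤ Real.log b * (Real.log (φ T))⁻¹ + 1 := by
      filter_upwards [hbase] with T hT'
      obtain ⟨hT0, hT2, hT_L, hP1, hL1, hbP2, hNN1, hNNle, hNNgt, hy1, hcTb, hmu, hT2PL⟩ := hT'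
      have hP0 : (0:ℝ) < φ T := by linarith
      have hL0 : (0:ℝ) < Real.log (φ T) := by linarith
      have h6 : Real.log (⌊b * φ T⌋₊ : ℝ) ≤ Real.log b + Real.log (φ T) := by
        have h7 := Real.log_le_log (by linarith : (0:ℝ) < (⌊b * φ T⌋₊ : ℝ)) hNNle
        rwa [Real.log_mul hb.ne' hP0.ne'] at h7
      have h8 : Real.log (⌊b * φ T⌋₊ : ℝ) / Real.log (φ T)
          ≤ (Real.log b + Real.log (φ T)) / Real.log (φ T) := (div_le_div_iff_of_pos_right hL0).2 h6
      have hid : (Real.log b + Real.log (φ T)) / Real.log (φ T)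
          = Real.log b * (Real.log (φ T))⁻¹ + 1 := by field_simp
      linarith [hid ▸ h8]
    exact tendsto_of_tendsto_of_tendsto_of_le_of_le' hlbf hubf hlb hub
  have hlogT2 : Tendsto (fun T => Real.log (T/2) / Real.log (φ T)) atTop (𝓝 0) := by
    have hloglog : Tendsto (fun x : ℝ => Real.log x / x) atTop (𝓝 0) :=
      Real.isLittleO_log_id_atTop.tendsto_div_nhds_zero
    have hubf : Tendsto (fun T => Real.log (Real.log (φ T)) / Real.log (φ T)
        - Real.log c₀ * (Real.log (φ T))⁻¹) atTop (𝓝 0) := by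
      have := (hloglog.comp hL8).sub (hLinv.const_mul (Real.log c₀))
      simpa [Function.comp] using this
    have hlb : ∀ᶠ T in atTop, (0:ℝ) ≤ Real.log (T/2) / Real.log (φ T) := by
      filter_upwards [hbase] with T hT'
      obtain ⟨hT0, hT2, hT_L, hP1, hL1, hbP2, hNN1, hNNle, hNNgt, hy1, hcTb, hmu, hT2PL⟩ := hT'
      have hL0 : (0:ℝ) < Real.log (φ T) := by linarith
      exact div_nonneg (Real.log_nonneg (by linarith)) hL0.le
    have hub : ∀ᶠ T in atTop, Real.log (T/2) / Real.log (φ T)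
        ≤ Real.log (Real.log (φ T)) / Real.log (φ T) - Real.log c₀ * (Real.log (φ T))⁻¹ := by
      filter_upwards [hbase] with T hT'
      obtain ⟨hT0, hT2, hT_L, hP1, hL1, hbP2, hNN1, hNNle, hNNgt, hy1, hcTb, hmu, hT2PL⟩ := hT'
      have hL0 : (0:ℝ) < Real.log (φ T) := by linarith
      have hTle : T ≤ Real.log (φ T) / c₀ := (le_div_iff₀ hc₀).2 (by linarith)
      have h6 : Real.log (T/2) ≤ Real.log T :=
        Real.log_le_log (by linarith) (by linarith)
      have h7 : Real.log T ≤ Real.log (Real.log (φ T) / c₀) := Real.log_le_log hT0 hTle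
      rw [Real.log_div hL0.ne' hc₀.ne'] at h7
      have h8 : Real.log (T/2) / Real.log (φ T)
          ≤ (Real.log (Real.log (φ T)) - Real.log c₀) / Real.log (φ T) :=
        (div_le_div_iff_of_pos_right hL0).2 (by linarith)
      have hid : (Real.log (Real.log (φ T)) - Real.log c₀) / Real.log (φ T)
          = Real.log (Real.log (φ T)) / Real.log (φ T)
            - Real.log c₀ * (Real.log (φ T))⁻¹ := by ring
      linarith [hid ▸ h8]
    exact tendsto_of_tendsto_of_tendsto_of_le_of_le' tendsto_const_nhds hubf hlb hub
  have hlogc : Tendsto (fun T => Real.log c * (Real.log (φ T))⁻¹) atTop (𝓝 0) := by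
    have := hLinv.const_mul (Real.log c); simpa using this
  have hbr : Tendsto (fun T => (Real.log (c * φ T ^ l * (T/2))
      - Real.log (⌊b * φ T⌋₊ : ℝ)) / Real.log (φ T)) atTop (𝓝 (l - 1)) := by
    have hrhs : Tendsto (fun T => Real.log c * (Real.log (φ T))⁻¹ + l
        + Real.log (T/2) / Real.log (φ T)
        - Real.log (⌊b * φ T⌋₊ : ℝ) / Real.log (φ T)) atTop (𝓝 (0 + l + 0 - 1)) :=
      ((hlogc.add (tendsto_const_nhds (x := l))).add hlogT2).sub hlogNN
    have heq : ∀ᶠ T in atTop, Real.log c * (Real.log (φ T))⁻¹ + l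
        + Real.log (T/2) / Real.log (φ T)
        - Real.log (⌊b * φ T⌋₊ : ℝ) / Real.log (φ T)
        = (Real.log (c * φ T ^ l * (T/2)) - Real.log (⌊b * φ T⌋₊ : ℝ)) / Real.log (φ T) := by
      filter_upwards [hbase] with T hT'
      obtain ⟨hT0, hT2, hT_L, hP1, hL1, hbP2, hNN1, hNNle, hNNgt, hy1, hcTb, hmu, hT2PL⟩ := hT'
      have hP0 : (0:ℝ) < φ T := by linarith
      have hL0 : (0:ℝ) < Real.log (φ T) := by linarith
      have hrpow0 : (0:ℝ) < φ T ^ l := Real.rpow_pos_of_pos hP0 l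
      have hlogy : Real.log (c * φ T ^ l * (T/2))
          = Real.log c + l * Real.log (φ T) + Real.log (T/2) := by
        rw [Real.log_mul (mul_pos hc hrpow0).ne' (by linarith : (T:ℝ)/2 ≠ 0),
          Real.log_mul hc.ne' hrpow0.ne', Real.log_rpow hP0]
      rw [hlogy]; field_simp
    have h9 := hrhs.congr' heq
    have : (0:ℝ) + l + 0 - 1 = l - 1 := by ring
    rwa [this] at h9
  have hg_tendsto : Tendsto g atTop (𝓝 (b * (l - 1))) := by
    have hsum3 : Tendsto (fun T => c * φ T ^ l * (T/2) / (φ T * Real.log (φ T))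
        + ((⌊b * φ T⌋₊ : ℝ) / φ T) * ((Real.log (c * φ T ^ l * (T/2))
            - Real.log (⌊b * φ T⌋₊ : ℝ)) / Real.log (φ T))
        + (⌊b * φ T⌋₊ : ℝ) / (φ T * Real.log (φ T))) atTop (𝓝 (0 + b * (l - 1) + 0)) :=
      (hA.add (hNb.mul hbr)).add hC
    have heq : ∀ᶠ T in atTop, c * φ T ^ l * (T/2) / (φ T * Real.log (φ T))
        + ((⌊b * φ T⌋₊ : ℝ) / φ T) * ((Real.log (c * φ T ^ l * (T/2))
            - Real.log (⌊b * φ T⌋₊ : ℝ)) / Real.log (φ T))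
        + (⌊b * φ T⌋₊ : ℝ) / (φ T * Real.log (φ T)) = g T := by
      filter_upwards [hbase] with T hT'
      obtain ⟨hT0, hT2, hT_L, hP1, hL1, hbP2, hNN1, hNNle, hNNgt, hy1, hcTb, hmu, hT2PL⟩ := hT'
      have hP0 : (0:ℝ) < φ T := by linarith
      have hL0 : (0:ℝ) < Real.log (φ T) := by linarith
      simp only [hg_def]
      field_simp
    have h9 := hsum3.congr' heq
    have : (0:ℝ) + b * (l - 1) + 0 = b * (l - 1) := by ring
    rwa [this] at h9
  have hcob : Filter.IsCoboundedUnder (· ≤ ·) atTop (fun T : ℝ =>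
      (1 / (φ T * Real.log (φ T))) *
        Real.log (∑' k : ℕ,
          (c * (φ T) ^ l) ^ (⌊b * φ T⌋₊ + k) * Real.exp (-T/2) * (T/2) ^ (⌊b * φ T⌋₊ + k)
            / (Nat.factorial (⌊b * φ T⌋₊ + k)))) :=
    (Filter.isBoundedUnder_of_eventually_ge hKle).isCoboundedUnder_le
  have hbdd : Filter.IsBoundedUnder (· ≤ ·) atTop g := hg_tendsto.isBoundedUnder_le
  refine le_trans (Filter.limsup_le_limsup hle hcob hbdd) ?_
  rw [hg_tendsto.limsup_eq]
  linarith [le_of_eq (show b * (l - 1) = -(1-l)*b by ring)]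
end

section
/- Let φ:(0,∞)→(0,∞) satisfy lim_{T→∞} φ(T) = ∞ and liminf_{T→∞} (ln φ(T))/T > 0 (this covers both the case lim_{T→∞}(ln φ(T))/T = k for a constant k ∈ (0,∞) and the case lim_{T→∞}(ln φ(T))/T = ∞). Then for all constants M > 0, a > 0 and l ∈ [0,1), limsup_{T→∞} (1/(φ(T)·ln φ(T))) · ln( Σ_{r=⌊aφ(T)⌋}^{∞} exp{ (r/2)(1+l)·ln r + r·ln(2M) } · e^{−T} T^r / r! ) ≤ −(1−l)·a/3, where the infinite series converges for every T with ⌊aφ(T)⌋ ≥ 1. -/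
/-!
Stirling's bound `r! ≥ (r/e)^r` turns the `r`-th summand into at most
`exp (r (log T + log 2M + 1) - (1-l)/2 · r log r)`. On the tail `r ≥ N = ⌊a φ(T)⌋` we have
`log r ≥ log N ~ log φ(T) ≥ c T`, so the linear part is eaten by `(1-l)/6 · r log r` and the tail
is dominated by a geometric series with leading term `exp (-(1-l)/3 · N log N)`. Since
`N log N ~ a φ(T) log φ(T)`, the limsup is at most `-(1-l) a / 3`. The first summand alone gives
a lower bound tending to `-a`; it is needed because the real `limsup` of a function unbounded
below is the junk value `0`.
-/

open Filter Real Topology Asymptotics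

noncomputable def seriesTerm (M l T : ℝ) (r : ℕ) : ℝ :=
  exp ((r : ℝ) / 2 * (1 + l) * log r + r * log (2 * M)) * exp (-T) * T ^ r / r.factorial

theorem mul_log_sub_le_log_factorial (r : ℕ) : r * log r - r ≤ log r.factorial := by
  rcases eq_or_ne r 0 with rfl | hr
  · simp
  · have := Stirling.le_log_factorial_stirling hr
    have := log_natCast_nonneg r
    have := log_pos (by linarith [pi_gt_three] : (1 : ℝ) < 2 * π)
    linarith

theorem log_factorial_le_mul_log (r : ℕ) : log r.factorial ≤ r * log r := by
  rw [← log_pow]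
  exact log_le_log (by positivity) (mod_cast r.factorial_le_pow)

section SeriesTerm

variable {T : ℝ} (M : ℝ) {l : ℝ}

theorem seriesTerm_eq_exp (hT : 0 < T) (r : ℕ) :
    seriesTerm M l T r =
      exp (r / 2 * (1 + l) * log r + r * log (2 * M) - T + r * log T - log r.factorial) := by
  have hpow : T ^ r = exp (r * log T) := by rw [exp_nat_mul, exp_log hT]
  rw [seriesTerm, hpow, exp_sub, exp_log (by positivity)]
  simp only [exp_add, exp_sub, exp_neg, div_eq_mul_inv]

theorem seriesTerm_pos (hT : 0 < T) (r : ℕ) : 0 < seriesTerm M l T r := by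
  unfold seriesTerm
  positivity

theorem seriesTerm_le_exp (hT : 0 < T) (r : ℕ) :
    seriesTerm M l T r ≤ exp (r * (log T + log (2 * M) + 1) - (1 - l) / 2 * (r * log r)) := by
  rw [seriesTerm_eq_exp M hT, exp_le_exp]
  linarith [mul_log_sub_le_log_factorial r]

theorem summable_exp_mul_sub_mul_mul_log (K : ℝ) {δ : ℝ} (hδ : 0 < δ) :
    Summable fun r : ℕ => exp (r * K - δ * (r * log r)) := by
  refine Summable.of_norm_bounded_eventually_nat summable_exp_neg_nat ?_
  have hlog : Tendsto (fun r : ℕ => log r) atTop atTop :=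
    tendsto_log_atTop.comp tendsto_natCast_atTop_atTop
  filter_upwards [hlog.eventually_ge_atTop ((K + 1) / δ)] with r hr
  rw [norm_of_nonneg (exp_pos _).le, exp_le_exp]
  rw [div_le_iff₀ hδ] at hr
  nlinarith [(Nat.cast_nonneg r : (0 : ℝ) ≤ r)]

theorem summable_seriesTerm (hT : 0 < T) (hl : l < 1) : Summable (seriesTerm M l T) :=
  (summable_exp_mul_sub_mul_mul_log _ (by linarith : 0 < (1 - l) / 2)).of_nonneg_of_le
    (fun r => (seriesTerm_pos M hT r).le) (seriesTerm_le_exp M hT)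

theorem summable_seriesTerm_nat_add (hT : 0 < T) (hl : l < 1) (N : ℕ) :
    Summable fun j => seriesTerm M l T (N + j) := by
  simpa only [add_comm] using (summable_nat_add_iff N).mpr (summable_seriesTerm M hT hl)

theorem seriesTerm_le_tsum (hT : 0 < T) (hl : l < 1) (N : ℕ) :
    seriesTerm M l T N ≤ ∑' j, seriesTerm M l T (N + j) := by
  simpa using (summable_seriesTerm_nat_add M hT hl N).le_tsum 0
    (fun j _ => (seriesTerm_pos M hT _).le)

theorem exp_mul_sub_mul_mul_log_le_geometric {K δ β : ℝ} {N : ℕ} (hN : 1 ≤ N) (hβδ : β ≤ δ)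
    (hK : K ≤ (δ - β) * log N) (hβ : 1 ≤ β * log N) (j : ℕ) :
    exp ((N + j : ℕ) * K - δ * ((N + j : ℕ) * log (N + j : ℕ))) ≤
      exp (-β * (N * log N)) * exp (-1) ^ j := by
  rw [← exp_nat_mul, ← exp_add, exp_le_exp]
  have hlogN : 0 ≤ log N := log_natCast_nonneg N
  have hβ0 : 0 ≤ β := by nlinarith
  have hlog_le : log N ≤ log (N + j : ℕ) :=
    log_le_log (by exact_mod_cast hN) (by exact_mod_cast N.le_add_right j)
  push_cast at hlog_le ⊢
  have hj : (0 : ℝ) ≤ j := j.cast_nonneg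
  have hN0 : (0 : ℝ) ≤ N := N.cast_nonneg
  nlinarith [mul_le_mul_of_nonneg_left hK (add_nonneg hN0 hj),
    mul_le_mul_of_nonneg_left hlog_le (mul_nonneg (hβ0.trans hβδ) (add_nonneg hN0 hj))]

theorem log_tsum_seriesTerm_le (hT : 0 < T) {β : ℝ} (hβl : β ≤ (1 - l) / 2) {N : ℕ}
    (hN : 1 ≤ N) (hK : log T + log (2 * M) + 1 ≤ ((1 - l) / 2 - β) * log N)
    (hβ : 1 ≤ β * log N) :
    log (∑' j, seriesTerm M l T (N + j)) ≤ log 2 - β * (N * log N) := by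
  have hl : l < 1 := by nlinarith [log_natCast_nonneg N]
  have hexp : exp (-1) < 1 / 2 := by
    rw [exp_neg, inv_lt_comm₀ (exp_pos 1) (by norm_num)]
    linarith [exp_one_gt_d9]
  have hsum : ∑' j, seriesTerm M l T (N + j) ≤ 2 * exp (-β * (N * log N)) :=
    calc ∑' j, seriesTerm M l T (N + j)
        ≤ ∑' j : ℕ, exp (-β * (N * log N)) * exp (-1) ^ j :=
          (summable_seriesTerm_nat_add M hT hl N).tsum_le_tsum
            (fun j => (seriesTerm_le_exp M hT _).trans
              (exp_mul_sub_mul_mul_log_le_geometric hN hβl hK hβ j))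
            ((summable_geometric_of_lt_one (exp_pos _).le (by linarith)).mul_left _)
      _ = exp (-β * (N * log N)) * (1 - exp (-1))⁻¹ := by
          rw [tsum_mul_left, tsum_geometric_of_lt_one (exp_pos _).le (by linarith)]
      _ ≤ exp (-β * (N * log N)) * 2 := by
          gcongr
          rw [inv_le_comm₀ (by linarith) two_pos]
          linarith
      _ = 2 * exp (-β * (N * log N)) := mul_comm _ _
  have hpos := (seriesTerm_pos M hT N).trans_le (seriesTerm_le_tsum M hT hl N)
  calc log (∑' j, seriesTerm M l T (N + j)) ≤ log (2 * exp (-β * (N * log N))) :=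
        log_le_log hpos hsum
    _ = log 2 - β * (N * log N) := by
        rw [log_mul two_ne_zero (exp_pos _).ne', log_exp]
        ring

theorem le_log_tsum_seriesTerm (hT : 1 ≤ T) (hl₀ : -1 ≤ l) (hl : l < 1) (N : ℕ) :
    N * log (2 * M) - T - N * log N ≤ log (∑' j, seriesTerm M l T (N + j)) := by
  have hT0 : 0 < T := by linarith
  calc N * log (2 * M) - T - N * log N ≤ log (seriesTerm M l T N) := by
        rw [seriesTerm_eq_exp M hT0, log_exp]
        have := log_factorial_le_mul_log N
        have : 0 ≤ (N : ℝ) / 2 * (1 + l) * log N := by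
          have := log_natCast_nonneg N
          have : (0 : ℝ) ≤ 1 + l := by linarith
          positivity
        have : 0 ≤ (N : ℝ) * log T := mul_nonneg N.cast_nonneg (log_nonneg hT)
        linarith
    _ ≤ log (∑' j, seriesTerm M l T (N + j)) :=
        log_le_log (seriesTerm_pos M hT0 N) (seriesTerm_le_tsum M hT0 hl N)

end SeriesTerm

theorem tendsto_log_div_log_of_tendsto_div {α : Type*} {F : Filter α} {u v : α → ℝ} {a : ℝ}
    (ha : 0 < a) (hv : Tendsto v F atTop) (huv : Tendsto (fun x => u x / v x) F (𝓝 a)) :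
    Tendsto (fun x => log (u x) / log (v x)) F (𝓝 1) := by
  have hlogv := tendsto_log_atTop.comp hv
  have key : Tendsto (fun x => log (u x / v x) / log (v x) + 1) F (𝓝 1) := by
    simpa using ((huv.log ha.ne').div_atTop hlogv).add_const 1
  refine key.congr' ?_
  filter_upwards [hv.eventually_gt_atTop 0, huv.eventually (eventually_gt_nhds ha),
    hlogv.eventually_gt_atTop 0] with x hvx huvx hlogv_pos
  have hux : u x ≠ 0 := fun h => by simp [h] at huvx
  have hlogvx : log (v x) ≠ 0 := ne_of_gt hlogv_pos
  rw [log_div hux hvx.ne']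
  field_simp
  ring

theorem tendsto_mul_log_div_mul_log {α : Type*} {F : Filter α} {u v : α → ℝ} {a : ℝ}
    (ha : 0 < a) (hv : Tendsto v F atTop) (huv : Tendsto (fun x => u x / v x) F (𝓝 a)) :
    Tendsto (fun x => u x * log (u x) / (v x * log (v x))) F (𝓝 a) := by
  have := huv.mul (tendsto_log_div_log_of_tendsto_div ha hv huv)
  rw [mul_one] at this
  exact this.congr fun x => (mul_div_mul_comm _ _ _ _).symm

theorem isBigO_id_of_eventually_le_div {g : ℝ → ℝ} {c : ℝ} (hc : 0 < c)
    (hcg : ∀ᶠ T in atTop, c ≤ g T / T) : (id : ℝ → ℝ) =O[atTop] g := by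
  refine IsBigO.of_bound c⁻¹ ?_
  filter_upwards [hcg, eventually_gt_atTop 0] with T hT hT0
  rw [le_div_iff₀ hT0] at hT
  rw [id, norm_of_nonneg hT0.le, le_inv_mul_iff₀ hc]
  exact hT.trans (le_abs_self _)

theorem limsup_le_of_eventually_le_of_tendsto {α : Type*} {F : Filter α} [F.NeBot]
    {f g h : α → ℝ} {x y : ℝ} (hhf : h ≤ᶠ[F] f) (hh : Tendsto h F (𝓝 x)) (hfg : f ≤ᶠ[F] g)
    (hg : Tendsto g F (𝓝 y)) : limsup f F ≤ y := by
  rw [← hg.limsup_eq]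
  exact limsup_le_limsup hfg (hh.isBoundedUnder_ge.mono_ge hhf).isCoboundedUnder_le
    hg.isBoundedUnder_le

theorem eventually_add_const_le_mul_log_floor {φ : ℝ → ℝ} (hφ : Tendsto φ atTop atTop)
    {a c : ℝ} (ha : 0 < a) (hc : 0 < c) (hcφ : ∀ᶠ T in atTop, c ≤ log (φ T) / T) (C : ℝ)
    {ε : ℝ} (hε : 0 < ε) : ∀ᶠ T in atTop, log T + C ≤ ε * log ⌊a * φ T⌋₊ := by
  have hNφ : Tendsto (fun T => (⌊a * φ T⌋₊ : ℝ) / φ T) atTop (𝓝 a) :=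
    (tendsto_nat_floor_mul_div_atTop ha.le).comp hφ
  have hequiv : (fun T => log (⌊a * φ T⌋₊ : ℝ)) ~[atTop] fun T => log (φ T) :=
    isEquivalent_of_tendsto_one (tendsto_log_div_log_of_tendsto_div ha hφ hNφ)
  have ho : (fun T => log T + C) =o[atTop] fun T => log (⌊a * φ T⌋₊ : ℝ) :=
    (isLittleO_log_id_atTop.add (isLittleO_const_id_atTop C)).trans_isBigO
      ((isBigO_id_of_eventually_le_div hc hcφ).trans hequiv.isBigO_symm)
  filter_upwards [ho.def hε] with T hT
  rw [norm_of_nonneg (log_natCast_nonneg _)] at hT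
  exact (le_abs_self _).trans hT

theorem eventually_log_tsum_seriesTerm_le {φ : ℝ → ℝ} (hφ : Tendsto φ atTop atTop)
    {a c : ℝ} (ha : 0 < a) (hc : 0 < c) (hcφ : ∀ᶠ T in atTop, c ≤ log (φ T) / T) (M : ℝ)
    {l : ℝ} (hl : l < 1) :
    ∀ᶠ T in atTop, log (∑' j, seriesTerm M l T (⌊a * φ T⌋₊ + j)) ≤
      log 2 - (1 - l) / 3 * (⌊a * φ T⌋₊ * log ⌊a * φ T⌋₊) := by
  have hN : Tendsto (fun T => ⌊a * φ T⌋₊) atTop atTop :=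
    tendsto_nat_floor_atTop.comp (hφ.const_mul_atTop ha)
  have hlogN : Tendsto (fun T => log (⌊a * φ T⌋₊ : ℝ)) atTop atTop :=
    tendsto_log_atTop.comp (tendsto_natCast_atTop_atTop.comp hN)
  filter_upwards [eventually_gt_atTop 0, hN.eventually_ge_atTop 1,
    hlogN.eventually_ge_atTop (3 / (1 - l)),
    eventually_add_const_le_mul_log_floor hφ ha hc hcφ (log (2 * M) + 1)
      (by linarith : 0 < (1 - l) / 6)] with T hT hN1 hβ hK
  rw [div_le_iff₀ (by linarith)] at hβ
  exact log_tsum_seriesTerm_le M hT (by linarith) hN1 (by linarith) (by linarith)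

theorem tendsto_id_div_mul_log_zero {φ : ℝ → ℝ} (hφ : Tendsto φ atTop atTop) {c : ℝ}
    (hc : 0 < c) (hcφ : ∀ᶠ T in atTop, c ≤ log (φ T) / T) :
    Tendsto (fun T => T / (φ T * log (φ T))) atTop (𝓝 0) := by
  have hlog : (fun T => log (φ T)) =o[atTop] fun T => φ T * log (φ T) := by
    simpa only [one_mul] using ((isLittleO_one_left_iff ℝ).mpr
      (tendsto_norm_atTop_atTop.comp hφ)).mul_isBigO (isBigO_refl (fun T => log (φ T)) atTop)
  exact ((isBigO_id_of_eventually_le_div hc hcφ).trans_isLittleO hlog).tendsto_div_nhds_zero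

theorem stmt_9_general (φ : ℝ → ℝ)
    (hφ : Filter.Tendsto φ Filter.atTop Filter.atTop)
    (hgrow : ∃ c > (0:ℝ), ∀ᶠ T in Filter.atTop, c ≤ Real.log (φ T) / T)
    (M a l : ℝ) (ha : 0 < a) (hl : l ∈ Set.Ico (0:ℝ) 1) :
    (∀ T : ℝ, 0 < T → 1 ≤ ⌊a * φ T⌋₊ → Summable (fun j : ℕ =>
      Real.exp ((((⌊a * φ T⌋₊ + j : ℕ) : ℝ) / 2) * (1 + l)
            * Real.log ((⌊a * φ T⌋₊ + j : ℕ) : ℝ)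
          + ((⌊a * φ T⌋₊ + j : ℕ) : ℝ) * Real.log (2 * M))
        * Real.exp (-T) * T ^ (⌊a * φ T⌋₊ + j) / (Nat.factorial (⌊a * φ T⌋₊ + j)))) ∧
    Filter.limsup (fun T : ℝ =>
      (1 / (φ T * Real.log (φ T))) *
        Real.log (∑' j : ℕ,
          Real.exp ((((⌊a * φ T⌋₊ + j : ℕ) : ℝ) / 2) * (1 + l)
                * Real.log ((⌊a * φ T⌋₊ + j : ℕ) : ℝ)
              + ((⌊a * φ T⌋₊ + j : ℕ) : ℝ) * Real.log (2 * M))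
            * Real.exp (-T) * T ^ (⌊a * φ T⌋₊ + j) / (Nat.factorial (⌊a * φ T⌋₊ + j))))
      Filter.atTop ≤ -(1 - l) * a / 3 := by
  obtain ⟨hl0, hl1⟩ := hl
  obtain ⟨c, hc, hcφ⟩ := hgrow
  refine ⟨fun T hT _ => summable_seriesTerm_nat_add M hT hl1 _, ?_⟩
  have hNφ : Tendsto (fun T => (⌊a * φ T⌋₊ : ℝ) / φ T) atTop (𝓝 a) :=
    (tendsto_nat_floor_mul_div_atTop ha.le).comp hφ
  have hφL : Tendsto (fun T => φ T * log (φ T)) atTop atTop :=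
    hφ.atTop_mul_atTop₀ (tendsto_log_atTop.comp hφ)
  have hR := tendsto_mul_log_div_mul_log ha hφ hNφ
  refine limsup_le_of_eventually_le_of_tendsto (x := -a)
    (h := fun T => (⌊a * φ T⌋₊ * log (2 * M) - T - ⌊a * φ T⌋₊ * log ⌊a * φ T⌋₊) /
      (φ T * log (φ T)))
    (g := fun T => (log 2 - (1 - l) / 3 * (⌊a * φ T⌋₊ * log ⌊a * φ T⌋₊)) / (φ T * log (φ T)))
    ?_ ?_ ?_ ?_
  · filter_upwards [eventually_ge_atTop 1, hφL.eventually_gt_atTop 0] with T hT hpos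
    rw [one_div_mul_eq_div]
    exact div_le_div_of_nonneg_right (le_log_tsum_seriesTerm M hT (by linarith) hl1 _) hpos.le
  · have hfloor := (hNφ.const_mul (log (2 * M))).div_atTop (tendsto_log_atTop.comp hφ)
    have := (hfloor.sub (tendsto_id_div_mul_log_zero hφ hc hcφ)).sub hR
    rw [sub_zero, zero_sub] at this
    exact this.congr fun T => by rw [Function.comp_apply]; ring
  · filter_upwards [eventually_log_tsum_seriesTerm_le hφ ha hc hcφ M hl1,
      hφL.eventually_gt_atTop 0] with T hT hpos
    rw [one_div_mul_eq_div]
    exact div_le_div_of_nonneg_right hT hpos.le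
  · have := ((tendsto_const_nhds (x := log 2)).div_atTop hφL).sub (hR.const_mul ((1 - l) / 3))
    convert this using 2 <;> ring

/-- If `φ(T) → ∞` and `liminf_{T→∞} ln φ(T) / T > 0` (i.e. eventually `ln φ(T)/T ≥ c` for
some `c > 0`), then for `M > 0`, `a > 0`, `l ∈ [0,1)`, the series
`Σ_{r=⌊aφ(T)⌋}^∞ exp((r/2)(1+l) ln r + r ln(2M)) e^{-T} T^r / r!` converges whenever
`⌊aφ(T)⌋ ≥ 1`, and `limsup_{T→∞} (1/(φ(T) ln φ(T))) ln(series) ≤ -(1-l) a / 3`. -/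
theorem stmt_9 (φ : ℝ → ℝ) (hφpos : ∀ T > (0:ℝ), 0 < φ T)
    (hφ : Filter.Tendsto φ Filter.atTop Filter.atTop)
    (hgrow : ∃ c > (0:ℝ), ∀ᶠ T in Filter.atTop, c ≤ Real.log (φ T) / T)
    (M a l : ℝ) (hM : 0 < M) (ha : 0 < a) (hl : l ∈ Set.Ico (0:ℝ) 1) :
    (∀ T : ℝ, 0 < T → 1 ≤ ⌊a * φ T⌋₊ → Summable (fun j : ℕ =>
      Real.exp ((((⌊a * φ T⌋₊ + j : ℕ) : ℝ) / 2) * (1 + l)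
            * Real.log ((⌊a * φ T⌋₊ + j : ℕ) : ℝ)
          + ((⌊a * φ T⌋₊ + j : ℕ) : ℝ) * Real.log (2 * M))
        * Real.exp (-T) * T ^ (⌊a * φ T⌋₊ + j) / (Nat.factorial (⌊a * φ T⌋₊ + j)))) ∧
    Filter.limsup (fun T : ℝ =>
      (1 / (φ T * Real.log (φ T))) *
        Real.log (∑' j : ℕ,
          Real.exp ((((⌊a * φ T⌋₊ + j : ℕ) : ℝ) / 2) * (1 + l)
                * Real.log ((⌊a * φ T⌋₊ + j : ℕ) : ℝ)
              + ((⌊a * φ T⌋₊ + j : ℕ) : ℝ) * Real.log (2 * M))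
            * Real.exp (-T) * T ^ (⌊a * φ T⌋₊ + j) / (Nat.factorial (⌊a * φ T⌋₊ + j))))
      Filter.atTop ≤ -(1 - l) * a / 3 :=
  stmt_9_general φ hφ hgrow M a l ha hl
end
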